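/- arXiv:2203.06039 — 9 statements merged into one kernel-verified Lean document; each statement's English description precedes it below -/
import Mathlib

section
/- Let G be a finite simple graph on n ≥ 2 vertices, let γ ≥ 1 be an integer, let α ≥ 1 and ε > 0 be reals, and suppose that every subgraph J of G with at least two vertices satisfies |E(J)| ≤ α·(|V(J)| − 1). Fix a γ-copy orientation of G and suppose every oriented copy is 1-valid, i.e., for every edge e = uv with B_e^u ≥ 1 one has s(u) − s(v) ≤ 1. Then every vertex v satisfies s(v) ≤ (1+ε)·α·γ + log_{1+ε} n. -/
/-!
Let `L = s(v)` and let `Sᵢ` be the set of vertices of load at least `L - i`. By `1`-validity every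
copy oriented out of `Sᵢ` ends in `Sᵢ₊₁`, so the loads of `Sᵢ` are carried by the edges inside
`Sᵢ₊₁`: `(L - i) |Sᵢ| ≤ γ |E(Sᵢ₊₁)| ≤ γ α (|Sᵢ₊₁| - 1)`. Hence `|Sᵢ₊₁| ≥ (1 + ε) |Sᵢ|` while
`L - i ≥ (1 + ε) α γ`, and since `|Sᵢ| ≤ n` this can go on for at most `log_{1+ε} n` steps.
-/

open Finset

lemma pow_mul_le_of_forall_lt_mul_le {a : ℕ → ℝ} {r : ℝ} (hr : 0 ≤ r) :
    ∀ {m : ℕ}, (∀ i < m, r * a i ≤ a (i + 1)) → r ^ m * a 0 ≤ a m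
  | 0, _ => by simp
  | m + 1, h =>
    calc r ^ (m + 1) * a 0 = r * (r ^ m * a 0) := by ring
      _ ≤ r * a m := by gcongr; exact pow_mul_le_of_forall_lt_mul_le hr fun i hi => h i (by omega)
      _ ≤ a (m + 1) := h m (by omega)

section Superlevel

variable {V : Type*} [Fintype V]

def outLoad (B : V → V → ℕ) (v : V) : ℕ := ∑ w, B v w

noncomputable def superlevel (f : V → ℕ) (t : ℝ) : Finset V := {u | t ≤ f u}

lemma mem_superlevel {f : V → ℕ} {t : ℝ} {u : V} : u ∈ superlevel f t ↔ t ≤ f u := by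
  simp [superlevel]

lemma superlevel_antitone (f : V → ℕ) : Antitone (superlevel f) :=
  fun _ _ hst _ hu => mem_superlevel.2 (hst.trans (mem_superlevel.1 hu))

end Superlevel

namespace SimpleGraph

variable {V : Type*} {G : SimpleGraph V} {γ : ℕ} {B : V → V → ℕ}

structure IsCopyOrientation (G : SimpleGraph V) (γ : ℕ) (B : V → V → ℕ) : Prop where
  eq_zero_of_not_adj : ∀ u w, ¬ G.Adj u w → B u w = 0
  add_swap : ∀ u w, G.Adj u w → B u w + B w u = γ

def edgesWithin (G : SimpleGraph V) (S : Finset V) : Set (Sym2 V) :=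
  {e | e ∈ G.edgeSet ∧ ∀ x ∈ e, x ∈ S}

def FractionalArboricityLE (G : SimpleGraph V) (α : ℝ) : Prop :=
  ∀ S : Finset V, 2 ≤ #S → ((G.edgesWithin S).ncard : ℝ) ≤ α * (#S - 1)

lemma IsCopyOrientation.adj_of_ne_zero (hB : G.IsCopyOrientation γ B) {u w : V}
    (huw : B u w ≠ 0) : G.Adj u w :=
  not_not.mp (mt (hB.eq_zero_of_not_adj u w) huw)

lemma edgesWithin_eq [DecidableEq V] [DecidableRel G.Adj] (S : Finset V) :
    G.edgesWithin S = ↑{e ∈ S.sym2 | e ∈ G.edgeSet} := by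
  ext e
  simp [edgesWithin, and_comm]

lemma IsCopyOrientation.sum_filter_adj_mk_eq (hB : G.IsCopyOrientation γ B) [DecidableEq V]
    [DecidableRel G.Adj] {S : Finset V} {x y : V} (hx : x ∈ S) (hy : y ∈ S) (hxy : G.Adj x y) :
    ∑ p ∈ S ×ˢ S with G.Adj p.1 p.2 ∧ s(p.1, p.2) = s(x, y), B p.1 p.2 = γ := by
  have hfiber : {p ∈ S ×ˢ S | G.Adj p.1 p.2 ∧ s(p.1, p.2) = s(x, y)} = {(x, y), (y, x)} := by
    ext ⟨a, b⟩
    simp only [mem_filter, mem_product, mem_insert, mem_singleton, Prod.mk.injEq, Sym2.eq_iff]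
    constructor
    · rintro ⟨-, -, h⟩
      exact h
    · rintro (⟨rfl, rfl⟩ | ⟨rfl, rfl⟩)
      · exact ⟨⟨hx, hy⟩, hxy, .inl ⟨rfl, rfl⟩⟩
      · exact ⟨⟨hy, hx⟩, hxy.symm, .inr ⟨rfl, rfl⟩⟩
  rw [hfiber, sum_pair (by simp [hxy.ne]), hB.add_swap x y hxy]

lemma IsCopyOrientation.sum_sum_eq_mul_ncard_edgesWithin (hB : G.IsCopyOrientation γ B)
    (S : Finset V) : ∑ u ∈ S, ∑ w ∈ S, B u w = γ * (G.edgesWithin S).ncard := by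
  classical
  let E : Finset (Sym2 V) := {e ∈ S.sym2 | e ∈ G.edgeSet}
  have hmaps : ∀ p ∈ {p ∈ S ×ˢ S | G.Adj p.1 p.2}, s(p.1, p.2) ∈ E := by
    rintro ⟨a, b⟩ hp
    simp only [mem_filter, mem_product] at hp
    simpa only [E, mem_filter, mem_sym2_iff, Sym2.mem_iff, forall_eq_or_imp, forall_eq,
      mem_edgeSet] using hp
  have hsupp : ∀ p ∈ S ×ˢ S, B p.1 p.2 ≠ 0 → G.Adj p.1 p.2 := fun _ _ => hB.adj_of_ne_zero
  calc ∑ u ∈ S, ∑ w ∈ S, B u w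
      = ∑ p ∈ S ×ˢ S with G.Adj p.1 p.2, B p.1 p.2 := by
        rw [sum_filter_of_ne hsupp, sum_product]
    _ = ∑ e ∈ E, ∑ p ∈ S ×ˢ S with G.Adj p.1 p.2 ∧ s(p.1, p.2) = e, B p.1 p.2 := by
        rw [← sum_fiberwise_of_maps_to hmaps]
        simp only [filter_filter]
    _ = ∑ e ∈ E, γ := by
        refine sum_congr rfl fun e he => ?_
        induction e using Sym2.ind with
        | _ x y =>
          simp only [E, mem_filter, mem_sym2_iff, Sym2.mem_iff, forall_eq_or_imp, forall_eq,
            mem_edgeSet] at he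
          exact hB.sum_filter_adj_mk_eq he.1.1 he.1.2 he.2
    _ = γ * (G.edgesWithin S).ncard := by
        rw [sum_const, smul_eq_mul, mul_comm, edgesWithin_eq, Set.ncard_coe_finset]

variable [Fintype V]

def CopiesValid (G : SimpleGraph V) (B : V → V → ℕ) (η : ℝ) : Prop :=
  ∀ u w, G.Adj u w → 1 ≤ B u w → (outLoad B u : ℝ) - outLoad B w ≤ η

lemma IsCopyOrientation.sum_outLoad_le (hB : G.IsCopyOrientation γ B) {A S : Finset V}
    (hAS : A ⊆ S) (hout : ∀ u ∈ A, ∀ w, B u w ≠ 0 → w ∈ S) :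
    ∑ u ∈ A, outLoad B u ≤ γ * (G.edgesWithin S).ncard :=
  calc ∑ u ∈ A, outLoad B u = ∑ u ∈ A, ∑ w ∈ S, B u w :=
        sum_congr rfl fun u hu =>
          (sum_subset (subset_univ S) fun w _ hw => not_not.mp (mt (hout u hu w) hw)).symm
    _ ≤ ∑ u ∈ S, ∑ w ∈ S, B u w := sum_le_sum_of_subset hAS
    _ = γ * (G.edgesWithin S).ncard := hB.sum_sum_eq_mul_ncard_edgesWithin S

lemma IsCopyOrientation.adj_and_mem_superlevel (hB : G.IsCopyOrientation γ B)
    (hvalid : G.CopiesValid B 1) {t : ℝ} {u w : V} (hu : u ∈ superlevel (outLoad B) t)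
    (huw : B u w ≠ 0) : G.Adj u w ∧ w ∈ superlevel (outLoad B) (t - 1) := by
  have hadj := hB.adj_of_ne_zero huw
  have := hvalid u w hadj (Nat.one_le_iff_ne_zero.2 huw)
  exact ⟨hadj, mem_superlevel.2 (by linarith [mem_superlevel.1 hu])⟩

lemma IsCopyOrientation.mul_card_superlevel_le (hB : G.IsCopyOrientation γ B)
    (hvalid : G.CopiesValid B 1) {α : ℝ} (harb : G.FractionalArboricityLE α) {t : ℝ} (ht : 0 < t)
    (hne : (superlevel (outLoad B) t).Nonempty) :
    t * #(superlevel (outLoad B) t) ≤ γ * (α * (#(superlevel (outLoad B) (t - 1)) - 1)) := by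
  set A := superlevel (outLoad B) t
  set T := superlevel (outLoad B) (t - 1)
  have hAT : A ⊆ T := superlevel_antitone _ (by linarith)
  have hout : ∀ u ∈ A, ∀ w, B u w ≠ 0 → w ∈ T := fun u hu w huw =>
    (hB.adj_and_mem_superlevel hvalid hu huw).2
  have hT : 2 ≤ #T := by
    classical
    obtain ⟨u, hu⟩ := hne
    have hpos : outLoad B u ≠ 0 := Nat.cast_ne_zero.1 (ht.trans_le (mem_superlevel.1 hu)).ne'
    obtain ⟨w, -, huw⟩ := exists_ne_zero_of_sum_ne_zero hpos
    obtain ⟨hadj, hw⟩ := hB.adj_and_mem_superlevel hvalid hu huw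
    calc 2 = #{u, w} := (card_pair hadj.ne).symm
      _ ≤ #T := card_le_card (insert_subset (hAT hu) (singleton_subset_iff.2 hw))
  calc t * #A ≤ ∑ u ∈ A, (outLoad B u : ℝ) := by
        simpa [mul_comm] using card_nsmul_le_sum A (fun u => (outLoad B u : ℝ)) t
          fun u hu => mem_superlevel.1 hu
    _ ≤ γ * (G.edgesWithin T).ncard := by exact_mod_cast hB.sum_outLoad_le hAT hout
    _ ≤ γ * (α * (#T - 1)) := by gcongr; exact harb T hT

lemma IsCopyOrientation.mul_card_superlevel_le_card (hB : G.IsCopyOrientation γ B)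
    (hvalid : G.CopiesValid B 1) {α : ℝ} (harb : G.FractionalArboricityLE α) (hαγ : 0 < α * γ)
    {r t : ℝ} (hr : 0 < r) (hrt : r * α * γ ≤ t) (hne : (superlevel (outLoad B) t).Nonempty) :
    r * #(superlevel (outLoad B) t) ≤ #(superlevel (outLoad B) (t - 1)) := by
  have key := hB.mul_card_superlevel_le hvalid harb (by nlinarith) hne
  refine le_of_mul_le_mul_left ?_ hαγ
  calc α * γ * (r * #(superlevel (outLoad B) t))
      = r * α * γ * #(superlevel (outLoad B) t) := by ring
    _ ≤ t * #(superlevel (outLoad B) t) := by gcongr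
    _ ≤ α * γ * #(superlevel (outLoad B) (t - 1)) := by linarith

end SimpleGraph

theorem stmt_0_general {V : Type*} [Fintype V]
    (G : SimpleGraph V)
    (γ : ℕ) (hγ : 1 ≤ γ)
    (α ε : ℝ) (hα : 1 ≤ α) (hε : 0 < ε)
    (harb : ∀ S : Finset V, 2 ≤ S.card →
      ({e : Sym2 V | e ∈ G.edgeSet ∧ ∀ x ∈ e, x ∈ S}.ncard : ℝ) ≤ α * ((S.card : ℝ) - 1))
    (B : V → V → ℕ)
    (hB0 : ∀ u v, ¬ G.Adj u v → B u v = 0)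
    (hBγ : ∀ u v, G.Adj u v → B u v + B v u = γ)
    (load : V → ℕ) (hload : ∀ v, load v = ∑ u, B v u)
    (hvalid : ∀ u v, G.Adj u v → 1 ≤ B u v → (load u : ℝ) - (load v : ℝ) ≤ 1) :
    ∀ v, (load v : ℝ) ≤ (1 + ε) * α * γ + Real.logb (1 + ε) (Fintype.card V) := by
  intro v
  obtain rfl : load = outLoad B := funext hload
  have hB : G.IsCopyOrientation γ B := ⟨hB0, hBγ⟩
  have hαγ : 0 < α * γ := mul_pos (by linarith) (by exact_mod_cast hγ)
  have hbase : 1 < 1 + ε := by linarith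
  have hn : (1 : ℝ) ≤ Fintype.card V := by exact_mod_cast Fintype.card_pos_iff.2 ⟨v⟩
  set L : ℝ := (outLoad B v : ℝ)
  set c : ℝ := (1 + ε) * α * γ
  rcases le_or_gt L c with hLc | hcL
  · linarith [Real.logb_nonneg hbase hn]
  have hv : ∀ i : ℕ, v ∈ superlevel (outLoad B) (L - i) := fun i =>
    mem_superlevel.2 (sub_le_self L i.cast_nonneg)
  set m := ⌊L - c⌋₊ + 1
  let a : ℕ → ℝ := fun i => #(superlevel (outLoad B) (L - i))
  have hgrowth : (1 + ε) ^ m * a 0 ≤ a m := by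
    refine pow_mul_le_of_forall_lt_mul_le (by linarith) fun i hi => ?_
    have hi : (i : ℝ) ≤ L - c := (Nat.le_floor_iff (sub_nonneg.2 hcL.le)).1 (by omega)
    simpa [a, sub_sub] using hB.mul_card_superlevel_le_card hvalid harb hαγ (r := 1 + ε)
      (by linarith) (by linarith) ⟨v, hv i⟩
  have hm : (m : ℝ) ≤ Real.logb (1 + ε) (Fintype.card V) := by
    rw [Real.le_logb_iff_rpow_le hbase (by linarith), Real.rpow_natCast]
    calc (1 + ε) ^ m ≤ (1 + ε) ^ m * a 0 :=
          le_mul_of_one_le_right (by positivity) (Nat.one_le_cast.2 (card_pos.2 ⟨v, hv 0⟩))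
      _ ≤ a m := hgrowth
      _ ≤ Fintype.card V := Nat.cast_le.2 (card_le_univ _)
  have := Nat.lt_floor_add_one (L - c)
  push_cast [m] at hm
  linarith

/-- If a finite simple graph `G` on `n ≥ 2` vertices has every subgraph `J`
(with at least two vertices) satisfying `|E(J)| ≤ α (|V(J)| - 1)`, and a `γ`-copy orientation
of `G` in which every oriented copy is `1`-valid, then every vertex `v` has load
`s(v) ≤ (1+ε) α γ + log_{1+ε} n`. -/
theorem stmt_0 {V : Type*} [Fintype V] [DecidableEq V]
    (G : SimpleGraph V)
    (hn : 2 ≤ Fintype.card V)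
    (γ : ℕ) (hγ : 1 ≤ γ)
    (α ε : ℝ) (hα : 1 ≤ α) (hε : 0 < ε)
    (harb : ∀ S : Finset V, 2 ≤ S.card →
      ({e : Sym2 V | e ∈ G.edgeSet ∧ ∀ x ∈ e, x ∈ S}.ncard : ℝ) ≤ α * ((S.card : ℝ) - 1))
    (B : V → V → ℕ)
    (hB0 : ∀ u v, ¬ G.Adj u v → B u v = 0)
    (hBγ : ∀ u v, G.Adj u v → B u v + B v u = γ)
    (load : V → ℕ) (hload : ∀ v, load v = ∑ u, B v u)
    (hvalid : ∀ u v, G.Adj u v → 1 ≤ B u v → (load u : ℝ) - (load v : ℝ) ≤ 1) :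
    ∀ v, (load v : ℝ) ≤ (1 + ε) * α * γ + Real.logb (1 + ε) (Fintype.card V) :=
  stmt_0_general G γ hγ α ε hα hε harb B hB0 hBγ load hload hvalid
end

section
/- Let G be a finite simple graph on n ≥ 2 vertices, let γ ≥ 1 be an integer, let α ≥ 1 and ε > 0 be reals, and suppose that every subgraph J of G with at least two vertices satisfies |E(J)| ≤ α·(|V(J)| − 1). Fix a γ-copy orientation of G in which every oriented copy is 1-valid, and suppose some vertex v satisfies s(v) > (1+ε)·α·γ + log_{1+ε} n. For i ≥ 0 let V_i be the set of vertices reachable from v by a directed path of length at most i, where a step may go from x to y whenever xy is an edge with B_{xy}^x ≥ 1. Then |V_i| ≥ (1+ε)^i for every integer i with 1 ≤ i ≤ log_{1+ε} n. -/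
/-!
Let `V_i` be the vertices reachable from `v` in at most `i` oriented steps. Since every copy is
1-valid, loads drop by at most one per step, so every vertex of `V_i` has load at least
`s(v) - i`. All copies leaving `V_i` end in `V_{i+1}` and each edge inside `V_{i+1}` carries
`γ` copies, so `|V_i| (s(v) - i) ≤ γ |E(V_{i+1})| ≤ α γ (|V_{i+1}| - 1)`. While
`i < log_{1+ε} n` we have `s(v) - i > (1+ε) α γ`, hence `|V_{i+1}| ≥ (1+ε) |V_i|`.
-/

open Finset

section

variable {V : Type*}

def reachWithin (r : V → V → Prop) (v : V) (i : ℕ) : Set V :=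
  {w | ∃ (m : ℕ) (f : ℕ → V), m ≤ i ∧ f 0 = v ∧ f m = w ∧ ∀ j < m, r (f j) (f (j + 1))}

section reachWithin

variable {r : V → V → Prop} {v : V}

theorem self_mem_reachWithin (i : ℕ) : v ∈ reachWithin r v i :=
  ⟨0, fun _ => v, i.zero_le, rfl, rfl, by simp⟩

theorem reachWithin_mono : Monotone (reachWithin r v) := by
  rintro i k hik w ⟨m, f, hm, hf⟩
  exact ⟨m, f, hm.trans hik, hf⟩

theorem mem_reachWithin_succ {i : ℕ} {w u : V} (hw : w ∈ reachWithin r v i) (hwu : r w u) :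
    u ∈ reachWithin r v (i + 1) := by
  obtain ⟨m, f, hm, hf0, hfm, hf⟩ := hw
  refine ⟨m + 1, fun j => if j ≤ m then f j else u, by omega, by simpa using hf0, by simp, ?_⟩
  intro j hj
  rcases (Nat.lt_succ_iff_lt_or_eq.1 hj) with hj | rfl
  · simpa [hj.le, Nat.succ_le_of_lt hj] using hf j hj
  · simpa [hfm] using hwu

theorem sub_le_of_mem_reachWithin {φ : V → ℝ} (hφ : ∀ x y, r x y → φ x - φ y ≤ 1) {i : ℕ}
    {w : V} (hw : w ∈ reachWithin r v i) : φ v - i ≤ φ w := by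
  obtain ⟨m, f, hm, hf0, rfl, hf⟩ := hw
  have hpath : ∀ j ≤ m, φ v - j ≤ φ (f j) := by
    intro j
    induction j with
    | zero => simp [hf0]
    | succ j ih =>
      intro hj
      have := hφ _ _ (hf j hj)
      push_cast
      linarith [ih (Nat.le_of_succ_le hj)]
  linarith [hpath m le_rfl, (Nat.cast_le (α := ℝ)).2 hm]

end reachWithin

theorem pow_le_of_forall_mul_le_succ {a : ℕ → ℝ} {κ : ℝ} (hκ : 0 ≤ κ) {n : ℕ} (h0 : 1 ≤ a 0)
    (hstep : ∀ i < n, κ * a i ≤ a (i + 1)) : κ ^ n ≤ a n := by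
  induction n with
  | zero => simpa using h0
  | succ n ih =>
    calc κ ^ (n + 1) = κ * κ ^ n := pow_succ' κ n
      _ ≤ κ * a n := mul_le_mul_of_nonneg_left (ih fun i hi => hstep i (by omega)) hκ
      _ ≤ a (n + 1) := hstep n n.lt_succ_self

section Orientation

variable [Fintype V] (G : SimpleGraph V) {γ : ℕ} {B : V → V → ℕ}

def edgesInside (S : Finset V) : Set (Sym2 V) :=
  {e | e ∈ G.edgeSet ∧ ∀ x ∈ e, x ∈ S}

theorem sum_sum_eq_mul_ncard_edges (hB0 : ∀ u v, ¬ G.Adj u v → B u v = 0)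
    (hBγ : ∀ u v, G.Adj u v → B u v + B v u = γ) (T : Finset V) :
    ∑ w ∈ T, ∑ u ∈ T, B w u = γ * (edgesInside G T).ncard := by
  classical
  set H := ((⊤ : G.Subgraph).induce T).spanningCoe
  have hH : ∀ a b, H.Adj a b ↔ G.Adj a b ∧ a ∈ T ∧ b ∈ T := by
    simp [H, and_comm, and_assoc]
  have hedges : edgesInside G T = H.edgeFinset := by
    ext e
    induction e using Sym2.ind with
    | _ a b => simp [edgesInside, hH]
  set P := univ.filter fun p : V × V => H.Adj p.1 p.2
  have hsum : ∑ w ∈ T, ∑ u ∈ T, B w u = ∑ p ∈ P, B p.1 p.2 := by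
    rw [← sum_product', sum_filter, ← sum_subset (subset_univ (T ×ˢ T))]
    · refine sum_congr rfl fun p hp => ?_
      rw [mem_product] at hp
      by_cases hp' : G.Adj p.1 p.2 <;> simp [hH, hp, hp', hB0]
    · intro p _ hp
      simp_all
  -- Over the ordered adjacent pairs, `B` and its transpose together count every edge `2γ` times.
  have hswap : ∑ p ∈ P, B p.1 p.2 = ∑ p ∈ P, B p.2 p.1 :=
    sum_nbij' Prod.swap Prod.swap (by simp [P, H.adj_comm]) (by simp [P, H.adj_comm])
      (by simp) (by simp) (by simp)
  have hγP : ∑ p ∈ P, (B p.1 p.2 + B p.2 p.1) = γ * #P := by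
    rw [sum_congr rfl fun p hp => hBγ p.1 p.2 ((hH _ _).1 (mem_filter.1 hp).2).1, sum_const,
      smul_eq_mul, mul_comm]
  have hP : #P = 2 * #H.edgeFinset := H.two_mul_card_edgeFinset.symm
  rw [hedges, Set.ncard_coe_finset, hsum]
  rw [sum_add_distrib, ← hswap, hP] at hγP
  linarith

theorem mul_card_add_one_le_card (hB0 : ∀ u v, ¬ G.Adj u v → B u v = 0)
    (hBγ : ∀ u v, G.Adj u v → B u v + B v u = γ) {α κ c : ℝ} (hαγ : 0 < α * γ)
    {S T : Finset V} (hST : S ⊆ T) (hout : ∀ w ∈ S, ∀ u, B w u ≠ 0 → u ∈ T)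
    (hT : ((edgesInside G T).ncard : ℝ) ≤ α * (#T - 1))
    (hS : ∀ w ∈ S, c ≤ ((∑ u, B w u : ℕ) : ℝ)) (hc : κ * α * γ ≤ c) :
    κ * #S + 1 ≤ #T := by
  have hrow : ∀ w ∈ S, ∑ u, B w u = ∑ u ∈ T, B w u := fun w hw =>
    (sum_subset (subset_univ T) fun u _ hu => by_contra fun h => hu (hout w hw u h)).symm
  have hsum : ∑ w ∈ S, ∑ u, B w u ≤ γ * (edgesInside G T).ncard :=
    calc ∑ w ∈ S, ∑ u, B w u = ∑ w ∈ S, ∑ u ∈ T, B w u := sum_congr rfl hrow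
      _ ≤ ∑ w ∈ T, ∑ u ∈ T, B w u := sum_le_sum_of_subset hST
      _ = _ := sum_sum_eq_mul_ncard_edges G hB0 hBγ T
  have hlow : #S * c ≤ ∑ w ∈ S, ((∑ u, B w u : ℕ) : ℝ) := by
    simpa using card_nsmul_le_sum S _ c hS
  have : κ * #S * (α * γ) ≤ (#T - 1) * (α * γ) :=
    calc κ * #S * (α * γ) = #S * (κ * α * γ) := by ring
      _ ≤ #S * c := by gcongr
      _ ≤ γ * (edgesInside G T).ncard :=
        hlow.trans (by exact_mod_cast hsum)
      _ ≤ γ * (α * (#T - 1)) := by gcongr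
      _ = (#T - 1) * (α * γ) := by ring
  linarith [le_of_mul_le_mul_right this hαγ]

def orientedAdj (G : SimpleGraph V) (B : V → V → ℕ) (x y : V) : Prop :=
  G.Adj x y ∧ 1 ≤ B x y

theorem mul_ncard_reachWithin_add_one_le (hB0 : ∀ u v, ¬ G.Adj u v → B u v = 0)
    (hBγ : ∀ u v, G.Adj u v → B u v + B v u = γ) {α κ : ℝ} (hαγ : 0 < α * γ)
    (harb : ∀ S : Finset V, 2 ≤ #S →
      ((edgesInside G S).ncard : ℝ) ≤ α * (#S - 1))
    (hvalid : ∀ x y, orientedAdj G B x y → ((∑ u, B x u : ℕ) : ℝ) - (∑ u, B y u : ℕ) ≤ 1)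
    {v u₀ : V} (hu₀ : B v u₀ ≠ 0) {j : ℕ} (hj : κ * α * γ ≤ ((∑ u, B v u : ℕ) : ℝ) - j) :
    κ * (reachWithin (orientedAdj G B) v j).ncard + 1 ≤
      (reachWithin (orientedAdj G B) v (j + 1)).ncard := by
  classical
  set R := reachWithin (orientedAdj G B) v
  have hout : ∀ w ∈ R j, ∀ u, B w u ≠ 0 → u ∈ R (j + 1) := fun w hw u hu =>
    mem_reachWithin_succ hw ⟨by_contra fun h => hu (hB0 w u h), Nat.one_le_iff_ne_zero.2 hu⟩
  have hcard : 2 ≤ #(R (j + 1)).toFinset :=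
    one_lt_card.2 ⟨v, Set.mem_toFinset.2 (self_mem_reachWithin _), u₀,
      Set.mem_toFinset.2 (hout v (self_mem_reachWithin j) u₀ hu₀),
      G.ne_of_adj (by_contra fun h => hu₀ (hB0 v u₀ h))⟩
  rw [Set.ncard_eq_toFinset_card' (R j), Set.ncard_eq_toFinset_card' (R (j + 1))]
  refine mul_card_add_one_le_card G hB0 hBγ hαγ
    (Set.toFinset_subset_toFinset.2 (reachWithin_mono j.le_succ))
    (fun w hw u hu => Set.mem_toFinset.2 (hout w (Set.mem_toFinset.1 hw) u hu))
    (harb _ hcard) (fun w hw => ?_) hj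
  exact sub_le_of_mem_reachWithin hvalid (Set.mem_toFinset.1 hw)

end Orientation

end

theorem stmt_1_general {V : Type*} [Fintype V]
    (G : SimpleGraph V)
    (γ : ℕ) (hγ : 1 ≤ γ)
    (α ε : ℝ) (hα : 1 ≤ α) (hε : 0 < ε)
    (harb : ∀ S : Finset V, 2 ≤ S.card →
      ({e : Sym2 V | e ∈ G.edgeSet ∧ ∀ x ∈ e, x ∈ S}.ncard : ℝ) ≤ α * ((S.card : ℝ) - 1))
    (B : V → V → ℕ)
    (hB0 : ∀ u v, ¬ G.Adj u v → B u v = 0)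
    (hBγ : ∀ u v, G.Adj u v → B u v + B v u = γ)
    (load : V → ℕ) (hload : ∀ v, load v = ∑ u, B v u)
    (hvalid : ∀ u v, G.Adj u v → 1 ≤ B u v → (load u : ℝ) - (load v : ℝ) ≤ 1)
    (v : V)
    (hbig : (1 + ε) * α * γ + Real.logb (1 + ε) (Fintype.card V) < (load v : ℝ)) :
    ∀ i : ℕ, 1 ≤ i → (i : ℝ) ≤ Real.logb (1 + ε) (Fintype.card V) →
      (1 + ε) ^ i ≤
        (({w : V | ∃ (m : ℕ) (f : ℕ → V), m ≤ i ∧ f 0 = v ∧ f m = w ∧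
            ∀ j < m, G.Adj (f j) (f (j + 1)) ∧ 1 ≤ B (f j) (f (j + 1))}).ncard : ℝ) := by
  intro i _ hi
  obtain rfl : load = fun w => ∑ u, B w u := funext hload
  have hαγ : 0 < α * γ := mul_pos (by linarith) (by exact_mod_cast hγ)
  have hL : 0 ≤ Real.logb (1 + ε) (Fintype.card V) :=
    Real.logb_nonneg (by linarith) (Nat.one_le_cast.2 (Fintype.card_pos_iff.2 ⟨v⟩))
  beta_reduce at hbig
  have hload_pos : (0 : ℝ) < ((∑ u, B v u : ℕ) : ℝ) := by
    have : 0 < (1 + ε) * α * γ := by rw [mul_assoc]; exact mul_pos (by linarith) hαγ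
    linarith
  obtain ⟨u₀, -, hu₀⟩ := exists_ne_zero_of_sum_ne_zero (Nat.cast_pos.1 hload_pos).ne'
  show (1 + ε) ^ i ≤ ((reachWithin (orientedAdj G B) v i).ncard : ℝ)
  refine pow_le_of_forall_mul_le_succ (a := fun i => ((reachWithin (orientedAdj G B) v i).ncard : ℝ))
    (by linarith) ?_ fun j hj => ?_
  · exact_mod_cast (Set.ncard_pos (Set.toFinite _)).2 ⟨v, self_mem_reachWithin 0⟩
  · refine (le_add_of_nonneg_right zero_le_one).trans
      (mul_ncard_reachWithin_add_one_le G hB0 hBγ hαγ harb (fun x y h => hvalid x y h.1 h.2) hu₀ ?_)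
    linarith [(Nat.cast_lt (α := ℝ)).2 hj]

/-- Under the hypotheses of Statement 0, if some vertex `v` has load exceeding
`(1+ε) α γ + log_{1+ε} n`, then the set `V_i` of vertices reachable from `v` by directed paths
of length at most `i` (following oriented copies) satisfies `|V_i| ≥ (1+ε)^i` for all
`1 ≤ i ≤ log_{1+ε} n`. -/
theorem stmt_1 {V : Type*} [Fintype V] [DecidableEq V]
    (G : SimpleGraph V)
    (hn : 2 ≤ Fintype.card V)
    (γ : ℕ) (hγ : 1 ≤ γ)
    (α ε : ℝ) (hα : 1 ≤ α) (hε : 0 < ε)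
    (harb : ∀ S : Finset V, 2 ≤ S.card →
      ({e : Sym2 V | e ∈ G.edgeSet ∧ ∀ x ∈ e, x ∈ S}.ncard : ℝ) ≤ α * ((S.card : ℝ) - 1))
    (B : V → V → ℕ)
    (hB0 : ∀ u v, ¬ G.Adj u v → B u v = 0)
    (hBγ : ∀ u v, G.Adj u v → B u v + B v u = γ)
    (load : V → ℕ) (hload : ∀ v, load v = ∑ u, B v u)
    (hvalid : ∀ u v, G.Adj u v → 1 ≤ B u v → (load u : ℝ) - (load v : ℝ) ≤ 1)
    (v : V)
    (hbig : (1 + ε) * α * γ + Real.logb (1 + ε) (Fintype.card V) < (load v : ℝ)) :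
    ∀ i : ℕ, 1 ≤ i → (i : ℝ) ≤ Real.logb (1 + ε) (Fintype.card V) →
      (1 + ε) ^ i ≤
        (({w : V | ∃ (m : ℕ) (f : ℕ → V), m ≤ i ∧ f 0 = v ∧ f m = w ∧
            ∀ j < m, G.Adj (f j) (f (j + 1)) ∧ 1 ≤ B (f j) (f (j + 1))}).ncard : ℝ) :=
  stmt_1_general G γ hγ α ε hα hε harb B hB0 hBγ load hload hvalid v hbig
end

section
/- Let G be a finite simple graph with a multi-orientation, let η ≥ 1 be a real, and suppose every oriented copy is η-valid. Let u = v_0, v_1, …, v_k (k ≥ 0) be a maximal η-tight chain from u, i.e., for each 0 ≤ i < k the pair v_iv_{i+1} is an edge with B^{v_i}_{v_iv_{i+1}} ≥ 1 and s(v_{i+1}) − s(v_i) ≤ −η/2, and v_k has no η-tight out-going oriented copy. Let uv be an edge of G and form a new multi-orientation by incrementing B_{uv}^u by one (inserting a copy of uv oriented from u to v) and, for each 0 ≤ i < k, decrementing B^{v_i}_{v_iv_{i+1}} by one and incrementing B^{v_{i+1}}_{v_iv_{i+1}} by one (reorienting one copy of each chain edge). Then under the new multi-orientation every oriented copy that was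 η-valid before remains η-valid, and every reoriented chain copy (now oriented from v_{i+1} to v_i) is η-valid. -/
/-- Inserting a copy of an edge `uv` oriented `u → v` and reorienting a maximal
`η`-tight chain from `u` keeps every previously `η`-valid oriented copy `η`-valid, and every
reoriented chain copy is `η`-valid. -/
theorem stmt_2 {V : Type*} [Fintype V] [DecidableEq V]
    (G : SimpleGraph V)
    (η : ℝ) (hη : 1 ≤ η)
    (B : V → V → ℕ)
    (hB0 : ∀ x y, ¬ G.Adj x y → B x y = 0)
    (load : V → ℕ) (hload : ∀ x, load x = ∑ y, B x y)
    (hvalid : ∀ x y, G.Adj x y → 1 ≤ B x y → (load x : ℝ) - (load y : ℝ) ≤ η)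
    (k : ℕ) (c : ℕ → V) (u v : V)
    (hc0 : c 0 = u)
    (hchain : ∀ i < k, G.Adj (c i) (c (i + 1)) ∧ 1 ≤ B (c i) (c (i + 1)) ∧
      (load (c (i + 1)) : ℝ) - (load (c i) : ℝ) ≤ -η / 2)
    (hmax : ∀ w, G.Adj (c k) w → 1 ≤ B (c k) w →
      ¬ ((load w : ℝ) - (load (c k) : ℝ) ≤ -η / 2))
    (huv : G.Adj u v)
    (B' : V → V → ℕ)
    (hB' : ∀ x y, (B' x y : ℤ) = (B x y : ℤ)
      + (if x = u ∧ y = v then 1 else 0)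
      + (((Finset.range k).filter (fun i => c (i + 1) = x ∧ c i = y)).card : ℤ)
      - (((Finset.range k).filter (fun i => c i = x ∧ c (i + 1) = y)).card : ℤ))
    (load' : V → ℕ) (hload' : ∀ x, load' x = ∑ y, B' x y) :
    (∀ x y, G.Adj x y → 1 ≤ B x y → (load' x : ℝ) - (load' y : ℝ) ≤ η) ∧
    (∀ i < k, (load' (c (i + 1)) : ℝ) - (load' (c i) : ℝ) ≤ η) := by
  -- Key computation: the new load equals the old load, plus one at the chain end `c k`.
  have key : ∀ x, (load' x : ℝ) = (load x : ℝ) + (if c k = x then 1 else 0) := by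
    intro x
    have hz : (load' x : ℤ) = (load x : ℤ) + (if c k = x then 1 else 0) := by
      have h1 : (load' x : ℤ) = ∑ y, (B' x y : ℤ) := by
        rw [hload' x]; push_cast; ring
      have h2 : (load x : ℤ) = ∑ y, (B x y : ℤ) := by
        rw [hload x]; push_cast; ring
      rw [h1, h2]
      have hrw : ∀ y : V, (B' x y : ℤ) = (B x y : ℤ)
          + (if x = u ∧ y = v then 1 else 0)
          + (∑ i ∈ Finset.range k, if c (i + 1) = x ∧ c i = y then (1:ℤ) else 0)
          - (∑ i ∈ Finset.range k, if c i = x ∧ c (i + 1) = y then (1:ℤ) else 0) := by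
        intro y
        rw [hB' x y]
        congr 2
        · rw [Finset.card_filter]; push_cast; rfl
        · rw [Finset.card_filter]; push_cast; rfl
      simp only [hrw]
      rw [Finset.sum_sub_distrib, Finset.sum_add_distrib, Finset.sum_add_distrib]
      have e1 : (∑ y : V, if x = u ∧ y = v then (1:ℤ) else 0)
          = (if x = u then 1 else 0) := by
        by_cases hxu : x = u <;> simp [hxu]
      have e2 : (∑ y : V, ∑ i ∈ Finset.range k, if c (i + 1) = x ∧ c i = y then (1:ℤ) else 0)
          = ∑ i ∈ Finset.range k, if c (i + 1) = x then (1:ℤ) else 0 := by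
        rw [Finset.sum_comm]
        refine Finset.sum_congr rfl fun i _ => ?_
        by_cases h : c (i + 1) = x <;> simp [h]
      have e3 : (∑ y : V, ∑ i ∈ Finset.range k, if c i = x ∧ c (i + 1) = y then (1:ℤ) else 0)
          = ∑ i ∈ Finset.range k, if c i = x then (1:ℤ) else 0 := by
        rw [Finset.sum_comm]
        refine Finset.sum_congr rfl fun i _ => ?_
        by_cases h : c i = x <;> simp [h]
      rw [e1, e2, e3]
      have tel : (∑ i ∈ Finset.range k, if c (i + 1) = x then (1:ℤ) else 0)
          - (∑ i ∈ Finset.range k, if c i = x then (1:ℤ) else 0)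
          = (if c k = x then 1 else 0) - (if c 0 = x then 1 else 0) := by
        rw [← Finset.sum_sub_distrib]
        exact Finset.sum_range_sub (fun i => if c i = x then (1:ℤ) else 0) k
      have hifs : (if x = u then (1:ℤ) else 0) = (if c 0 = x then 1 else 0) := by
        subst hc0
        by_cases h : c 0 = x
        · simp [h]
        · rw [if_neg (fun h' : x = c 0 => h h'.symm), if_neg h]
      omega
    have := congrArg (fun z : ℤ => (z : ℝ)) hz
    push_cast at this
    rw [this]
  constructor
  · intro x y hadj hB1
    rw [key x, key y]
    by_cases hx : c k = x
    · -- x is the chain end: use maximality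
      have hne : c k ≠ y := by rintro rfl; exact hadj.ne hx.symm
      have hm := hmax y (hx ▸ hadj) (hx ▸ hB1)
      push_neg at hm
      rw [hx] at hm
      have goal : (load x : ℝ) - (load y : ℝ) + 1 ≤ η := by
        rcases le_or_gt (load x) (load y) with h0 | h0
        · have : (load x : ℝ) ≤ (load y : ℝ) := by exact_mod_cast h0
          linarith
        · have h1 : (load y : ℝ) + 1 ≤ (load x : ℝ) := by exact_mod_cast h0
          linarith
      rw [if_pos hx, if_neg hne]
      linarith
    · have hv := hvalid x y hadj hB1
      rw [if_neg hx]
      by_cases hy : c k = y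
      · rw [if_pos hy]; linarith
      · rw [if_neg hy]; linarith
  · intro i hi
    obtain ⟨hadj, hB1, htight⟩ := hchain i hi
    rw [key, key]
    have h1 : (if c k = c (i + 1) then (1:ℝ) else 0) ≤ 1 := by split <;> norm_num
    have h2 : (0:ℝ) ≤ (if c k = c i then (1:ℝ) else 0) := by split <;> norm_num
    linarith
end

section
/- Let G be a finite simple graph with a multi-orientation, let η ≥ 1 be a real, and suppose every oriented copy is η-valid. Let w_0, w_1, …, w_k = u (k ≥ 0) be a maximal η-tight chain to u, i.e., for each 0 ≤ i < k the pair w_iw_{i+1} is an edge with B^{w_i}_{w_iw_{i+1}} ≥ 1 and s(w_{i+1}) − s(w_i) ≤ −η/2, and w_0 has no η-tight in-coming oriented copy. Let uv be an edge with B_{uv}^u ≥ 1 and form a new multi-orientation by decrementing B_{uv}^u by one (deleting a copy of uv oriented from u to v) and, for each 0 ≤ i < k, decrementing B^{w_i}_{w_iw_{i+1}} by one and incrementing B^{w_{i+1}}_{w_iw_{i+1}} by one (reorienting one copy of each chain edge). Then under the new multi-orientation every oriented copy that was η-valid before remains η-valid, and every reoriented chain copy (now oriented from w_{i+1} to w_i)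 is η-valid. -/
/-- Deleting a copy of an edge oriented `u → v` and reorienting a maximal
`η`-tight chain to `u` keeps every previously `η`-valid oriented copy `η`-valid, and every
reoriented chain copy is `η`-valid. -/
theorem stmt_3 {V : Type*} [Fintype V] [DecidableEq V]
    (G : SimpleGraph V)
    (η : ℝ) (hη : 1 ≤ η)
    (B : V → V → ℕ)
    (hB0 : ∀ x y, ¬ G.Adj x y → B x y = 0)
    (load : V → ℕ) (hload : ∀ x, load x = ∑ y, B x y)
    (hvalid : ∀ x y, G.Adj x y → 1 ≤ B x y → (load x : ℝ) - (load y : ℝ) ≤ η)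
    (k : ℕ) (c : ℕ → V) (u v : V)
    (hck : c k = u)
    (hchain : ∀ i < k, G.Adj (c i) (c (i + 1)) ∧ 1 ≤ B (c i) (c (i + 1)) ∧
      (load (c (i + 1)) : ℝ) - (load (c i) : ℝ) ≤ -η / 2)
    (hmax : ∀ x, G.Adj x (c 0) → 1 ≤ B x (c 0) →
      ¬ ((load (c 0) : ℝ) - (load x : ℝ) ≤ -η / 2))
    (huv : G.Adj u v) (hBuv : 1 ≤ B u v)
    (B' : V → V → ℕ)
    (hB' : ∀ x y, (B' x y : ℤ) = (B x y : ℤ)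
      - (if x = u ∧ y = v then 1 else 0)
      + (((Finset.range k).filter (fun i => c (i + 1) = x ∧ c i = y)).card : ℤ)
      - (((Finset.range k).filter (fun i => c i = x ∧ c (i + 1) = y)).card : ℤ))
    (load' : V → ℕ) (hload' : ∀ x, load' x = ∑ y, B' x y) :
    (∀ x y, G.Adj x y → 1 ≤ B x y → (load' x : ℝ) - (load' y : ℝ) ≤ η) ∧
    (∀ i < k, (load' (c (i + 1)) : ℝ) - (load' (c i) : ℝ) ≤ η) := by
  classical
  have countaux : ∀ (x : V) (f g : ℕ → V),
      ∑ y : V, ((((Finset.range k).filter (fun i => f i = x ∧ g i = y)).card : ℤ)) =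
      ∑ i ∈ Finset.range k, (if f i = x then (1:ℤ) else 0) := by
    intro x f g
    simp only [Finset.card_filter]
    push_cast
    rw [Finset.sum_comm]
    refine Finset.sum_congr rfl fun i _ => ?_
    by_cases h : f i = x
    · simp [h]
    · simp [h]
  have key : ∀ x, (load' x : ℤ) = (load x : ℤ) - (if x = c 0 then 1 else 0) := by
    intro x
    rw [hload' x, hload x]
    push_cast
    rw [Finset.sum_congr rfl fun y _ => hB' x y]
    rw [Finset.sum_sub_distrib, Finset.sum_add_distrib]
    rw [countaux x (fun i => c (i+1)) c, countaux x c (fun i => c (i+1))]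
    have hsplit : ∑ y : V, ((B x y : ℤ) - if x = u ∧ y = v then 1 else 0) =
        (∑ y : V, (B x y : ℤ)) - (if x = u then 1 else 0) := by
      rw [Finset.sum_sub_distrib]
      congr 1
      by_cases h : x = u
      · simp [h]
      · simp [h]
    rw [hsplit]
    have tel : (∑ i ∈ Finset.range k, (if c (i+1) = x then (1:ℤ) else 0)) -
        ∑ i ∈ Finset.range k, (if c i = x then (1:ℤ) else 0) =
        (if c k = x then 1 else 0) - (if c 0 = x then 1 else 0) :=
      by rw [← Finset.sum_sub_distrib]; exact Finset.sum_range_sub (fun i => if c i = x then (1:ℤ) else 0) k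
    have h2 : (if c k = x then (1:ℤ) else 0) = if x = u then 1 else 0 := by
      rw [hck]; exact if_congr eq_comm rfl rfl
    have h3 : (if c 0 = x then (1:ℤ) else 0) = if x = c 0 then 1 else 0 :=
      if_congr eq_comm rfl rfl
    rw [h2, h3] at tel
    linarith [tel]
  have keyR : ∀ x, (load' x : ℝ) = (load x : ℝ) - (if x = c 0 then 1 else 0) := by
    intro x
    have h := key x
    by_cases hx : x = c 0 <;> simp only [hx, if_true, if_false, eq_self_iff_true] at h ⊢ <;>
      exact_mod_cast h
  constructor
  · intro x y hadj hbxy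
    have hv := hvalid x y hadj hbxy
    rw [keyR x, keyR y]
    by_cases hy : y = c 0
    · subst hy
      by_cases hx : x = c 0
      · exact absurd hx hadj.ne
      · rw [if_pos rfl, if_neg hx]
        have hmx := hmax x hadj hbxy
        push_neg at hmx
        by_cases h2 : 2 ≤ η
        · linarith
        · push_neg at h2
          have h4 : (load x : ℝ) < (load (c 0) : ℝ) + 1 := by linarith
          have h5 : load x ≤ load (c 0) := by
            have : load x < load (c 0) + 1 := by exact_mod_cast h4
            omega
          have h6 : (load x : ℝ) ≤ (load (c 0) : ℝ) := by exact_mod_cast h5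
          linarith
    · by_cases hx : x = c 0
      · rw [if_neg hy, if_pos hx]; linarith
      · rw [if_neg hy, if_neg hx]; linarith
  · intro i hi
    obtain ⟨hadj, hb, hle⟩ := hchain i hi
    rw [keyR, keyR]
    by_cases h1 : c (i+1) = c 0 <;> by_cases h0 : c i = c 0
    · rw [if_pos h1, if_pos h0]; linarith
    · rw [if_pos h1, if_neg h0]; linarith
    · rw [if_neg h1, if_pos h0]; linarith
    · rw [if_neg h1, if_neg h0]; linarith
end

section
/- Let G be a finite simple graph, let γ ≥ 1 be an integer, let α′ > 0, and let δ, μ be reals with 1 > δ > 1/γ + μ ≥ 2/γ > 0 and such that δ − μ is an integer multiple of 1/γ. Let O be a (γ, α′)-orientation of G. Then there exists a (γ, α′)-orientation O′ of G under which every vertex has the same load as under O, together with a (δ, μ)-refinement H′ of G with respect to O′ such that H′ is a forest (contains no cycle). -/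
/-!
Call an edge undecided if both of its sides carry a value in `(δ, 1 - δ)`. If the undecided
edges contain a cycle, push `k / γ` units around it: loads are unchanged, and choosing `k`
minimal such that the heaviest dart of the cycle reaches `1 - δ` keeps all values in `[0, 1]`
(as `δ > 1 / γ`) while that dart's edge stops being undecided and no new edge becomes
undecided. Hence an orientation with a minimal undecided graph has an acyclic one, and that
undecided graph is the required refinement since `μ ≥ 0`.
-/

open Finset

namespace SimpleGraph

namespace Walk

variable {V : Type*} {G : SimpleGraph V} {a b u v : V}

lemma map_mk_map_toProd_darts (p : G.Walk a b) :
    (p.darts.map Dart.toProd).map (Function.uncurry Sym2.mk) = p.edges := by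
  simp only [edges, List.map_map]
  rfl

lemma adj_of_mem_map_toProd_darts (p : G.Walk a b) (h : (u, v) ∈ p.darts.map Dart.toProd) :
    G.Adj u v :=
  p.adj_of_mem_edges (p.map_mk_map_toProd_darts ▸ List.mem_map_of_mem h)

lemma IsTrail.nodup_map_toProd_darts {p : G.Walk a b} (hp : p.IsTrail) :
    (p.darts.map Dart.toProd).Nodup :=
  (p.map_mk_map_toProd_darts ▸ hp.edges_nodup).of_map _

lemma IsTrail.swap_not_mem_map_toProd_darts {p : G.Walk a b} (hp : p.IsTrail)
    (h : (u, v) ∈ p.darts.map Dart.toProd) : (v, u) ∉ p.darts.map Dart.toProd := by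
  intro h'
  have := List.inj_on_of_nodup_map (p.map_mk_map_toProd_darts ▸ hp.edges_nodup) h h'
    Sym2.eq_swap
  exact (p.adj_of_mem_map_toProd_darts h).ne (Prod.ext_iff.1 this).1

variable [DecidableEq V]

def flow (p : G.Walk a b) (u v : V) : ℤ :=
  (p.darts.map Dart.toProd).count (u, v) - (p.darts.map Dart.toProd).count (v, u)

lemma flow_swap (p : G.Walk a b) (u v : V) : p.flow v u = -p.flow u v := by
  simp only [flow, neg_sub]

lemma flow_eq_zero_of_not_adj (p : G.Walk a b) (h : ¬G.Adj u v) : p.flow u v = 0 := by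
  rw [flow, List.count_eq_zero_of_not_mem fun h' => h (p.adj_of_mem_map_toProd_darts h'),
    List.count_eq_zero_of_not_mem fun h' => h (p.adj_of_mem_map_toProd_darts h').symm, sub_self]

lemma sum_flow [Fintype V] (p : G.Walk a b) (v : V) :
    ∑ u, p.flow v u = (if a = v then 1 else 0) - (if b = v then 1 else 0) := by
  induction p with
  | nil => simp [flow]
  | @cons x y _ _ q ih =>
    have hout :
        ∑ u, (if ((x, y) == (v, u)) = true then 1 else 0 : ℤ) = if x = v then 1 else 0 := by
      by_cases hx : x = v <;> simp [hx, Prod.ext_iff]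
    have hin :
        ∑ u, (if ((x, y) == (u, v)) = true then 1 else 0 : ℤ) = if y = v then 1 else 0 := by
      by_cases hy : y = v <;> simp [hy, Prod.ext_iff]
    simp only [flow, darts_cons, List.map_cons, List.count_cons, sum_sub_distrib,
      Nat.cast_add, sum_add_distrib, Nat.cast_ite, Nat.cast_one, Nat.cast_zero] at ih ⊢
    rw [hout, hin]
    linarith

lemma sum_add_mul_flow [Fintype V] (p : G.Walk a a) (X : V → V → ℝ) (ε : ℝ) (v : V) :
    ∑ u, (X v u + ε * p.flow v u) = ∑ u, X v u := by
  rw [sum_add_distrib, ← mul_sum, ← Int.cast_sum, sum_flow, sub_self, Int.cast_zero, mul_zero,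
    add_zero]

namespace IsTrail

variable {p : G.Walk a b}

lemma flow_eq_one (hp : p.IsTrail) (h : (u, v) ∈ p.darts.map Dart.toProd) : p.flow u v = 1 := by
  rw [flow, List.count_eq_one_of_mem hp.nodup_map_toProd_darts h,
    List.count_eq_zero_of_not_mem (hp.swap_not_mem_map_toProd_darts h)]
  rfl

lemma flow_cases (hp : p.IsTrail) (u v : V) :
    p.flow u v = 0 ∨ (p.flow u v = 1 ∧ (u, v) ∈ p.darts.map Dart.toProd) ∨
      (p.flow u v = -1 ∧ (v, u) ∈ p.darts.map Dart.toProd) := by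
  by_cases huv : (u, v) ∈ p.darts.map Dart.toProd
  · exact .inr (.inl ⟨hp.flow_eq_one huv, huv⟩)
  by_cases hvu : (v, u) ∈ p.darts.map Dart.toProd
  · exact .inr (.inr ⟨by rw [p.flow_swap v u, hp.flow_eq_one hvu], hvu⟩)
  left
  rw [flow, List.count_eq_zero_of_not_mem huv, List.count_eq_zero_of_not_mem hvu, sub_self]

end IsTrail

end Walk

variable {V : Type*} {G : SimpleGraph V} {γ : ℕ} {δ : ℝ} {X : V → V → ℝ}

/-- A `(γ, α′)`-orientation of `G` without the bound `α′` on the loads. -/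
structure IsOrientation (G : SimpleGraph V) (γ : ℕ) (X : V → V → ℝ) : Prop where
  eq_zero_of_not_adj : ∀ u v, ¬G.Adj u v → X u v = 0
  mem_Icc : ∀ u v, G.Adj u v → 0 ≤ X u v ∧ X u v ≤ 1
  add_swap : ∀ u v, G.Adj u v → X u v + X v u = 1
  exists_int_div : ∀ u v, G.Adj u v → ∃ m : ℤ, X u v = m / γ

def undecidedGraph (G : SimpleGraph V) (δ : ℝ) (X : V → V → ℝ) : SimpleGraph V where
  Adj u v := G.Adj u v ∧ X u v ∈ Set.Ioo δ (1 - δ) ∧ X v u ∈ Set.Ioo δ (1 - δ)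
  symm := ⟨fun _ _ h => ⟨h.1.symm, h.2.2, h.2.1⟩⟩
  loopless := ⟨fun v h => G.loopless.irrefl v h.1⟩

lemma undecidedGraph_le : undecidedGraph G δ X ≤ G := fun _ _ h => h.1

namespace IsOrientation

/-- A dart traversed backwards stays nonnegative because its reverse stays at most `1`. -/
lemma add_mul_flow [DecidableEq V] {H : SimpleGraph V} {a b : V} (hX : IsOrientation G γ X)
    (hHG : H ≤ G) {p : H.Walk a b} (hp : p.IsTrail) (k : ℕ)
    (hk : ∀ e ∈ p.darts.map Dart.toProd, X e.1 e.2 + k / γ ≤ 1) :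
    IsOrientation G γ fun u v => X u v + k / γ * p.flow u v where
  eq_zero_of_not_adj u v h := by
    rw [hX.eq_zero_of_not_adj u v h, p.flow_eq_zero_of_not_adj fun h' => h (hHG h'),
      Int.cast_zero, mul_zero, add_zero]
  mem_Icc u v h := by
    have hε : (0 : ℝ) ≤ k / γ := by positivity
    obtain ⟨h0, h1⟩ := hX.mem_Icc u v h
    rcases hp.flow_cases u v with h' | ⟨h', huv⟩ | ⟨h', hvu⟩ <;> rw [h'] <;> push_cast
    · constructor <;> linarith
    · constructor <;> linarith [hk _ huv]
    · constructor <;> linarith [hk _ hvu, hX.add_swap u v h]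
  add_swap u v h := by
    rw [p.flow_swap v u, Int.cast_neg]
    linarith [hX.add_swap u v h]
  exists_int_div u v h := by
    obtain ⟨m, hm⟩ := hX.exists_int_div u v h
    exact ⟨m + k * p.flow u v, by rw [hm]; push_cast; ring⟩

lemma exists_undecidedGraph_lt [Fintype V] [DecidableEq V] (hX : IsOrientation G γ X)
    (hγ : 0 < γ) (hδ : 1 / γ < δ) (hcyc : ¬(undecidedGraph G δ X).IsAcyclic) :
    ∃ Y, IsOrientation G γ Y ∧ (∀ v, ∑ u, Y v u = ∑ u, X v u) ∧
      undecidedGraph G δ Y < undecidedGraph G δ X := by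
  obtain ⟨w, c, hc⟩ : ∃ w, ∃ c : (undecidedGraph G δ X).Walk w w, c.IsCycle := by
    simpa [IsAcyclic] using hcyc
  obtain ⟨d, hd, hmax⟩ := c.darts.toFinset.exists_max_image (fun d => X d.fst d.snd) <| by
    rw [List.toFinset_nonempty_iff, ← List.length_pos_iff, Walk.length_darts]
    linarith [hc.three_le_length]
  set a := X d.fst d.snd
  obtain ⟨-, ⟨-, haδ⟩, -⟩ := d.adj
  have hγ' : (0 : ℝ) < γ := by exact_mod_cast hγ
  set k := ⌈γ * (1 - δ - a)⌉₊
  have hk_ge : 1 - δ ≤ a + k / γ := by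
    have := Nat.le_ceil ((γ : ℝ) * (1 - δ - a))
    rw [← sub_le_iff_le_add', le_div_iff₀ hγ']
    linarith
  have hk_lt : a + k / γ < 1 - δ + 1 / γ := by
    have := Nat.ceil_lt_add_one (by nlinarith : (0 : ℝ) ≤ γ * (1 - δ - a))
    rw [← lt_sub_iff_add_lt', div_lt_iff₀ hγ']
    have hscale : (1 - δ + 1 / γ - a) * γ = γ * (1 - δ - a) + 1 := by field_simp; ring
    linarith
  have hdarts : ∀ e ∈ c.darts.map Dart.toProd, X e.1 e.2 ≤ a := by
    intro e he
    obtain ⟨d', hd', rfl⟩ := List.mem_map.1 he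
    exact hmax d' (List.mem_toFinset.2 hd')
  set Y : V → V → ℝ := fun u v => X u v + k / γ * c.flow u v
  have hYd : Y d.fst d.snd = a + k / γ := by
    simp [Y, a, hc.isTrail.flow_eq_one (List.mem_map_of_mem (List.mem_toFinset.1 hd))]
  refine ⟨Y, hX.add_mul_flow undecidedGraph_le hc.isTrail k fun e he => by linarith [hdarts e he],
    c.sum_add_mul_flow X _, lt_of_le_of_ne (fun u v ⟨huv, hY₁, hY₂⟩ => ?_) fun heq => ?_⟩
  · rcases hc.isTrail.flow_cases u v with h | ⟨-, h⟩ | ⟨-, h⟩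
    · have h' : c.flow v u = 0 := by rw [c.flow_swap, h, neg_zero]
      exact ⟨huv, by simpa [Y, h] using hY₁, by simpa [Y, h'] using hY₂⟩
    · exact c.adj_of_mem_map_toProd_darts h
    · exact (c.adj_of_mem_map_toProd_darts h).symm
  · have hd' : (undecidedGraph G δ Y).Adj d.fst d.snd := by rw [heq]; exact d.adj
    linarith [hd'.2.1.2]

lemma exists_isAcyclic_undecidedGraph [Fintype V] [DecidableEq V] (hX : IsOrientation G γ X)
    (hγ : 0 < γ) (hδ : 1 / γ < δ) :
    ∃ Y, IsOrientation G γ Y ∧ (∀ v, ∑ u, Y v u = ∑ u, X v u) ∧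
      (undecidedGraph G δ Y).IsAcyclic := by
  obtain ⟨Y, hmin⟩ := exists_minimalFor_of_wellFoundedLT
    (fun Y => IsOrientation G γ Y ∧ ∀ v, ∑ u, Y v u = ∑ u, X v u) (undecidedGraph G δ)
    ⟨X, hX, fun _ => rfl⟩
  obtain ⟨hY, hload⟩ := hmin.1
  refine ⟨Y, hY, hload, fun w c hc => ?_⟩
  obtain ⟨Z, hZ, hZload, hlt⟩ := hY.exists_undecidedGraph_lt hγ hδ fun h => h c hc
  exact hmin.not_lt ⟨hZ, fun v => (hZload v).trans (hload v)⟩ hlt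

end IsOrientation

end SimpleGraph

theorem stmt_5_general {V : Type*} [Fintype V] [DecidableEq V]
    (G : SimpleGraph V)
    (γ : ℕ) (hγ : 1 ≤ γ)
    (α' : ℝ)
    (δ μ : ℝ)
    (hδ2 : 1 / (γ : ℝ) + μ < δ) (hμ : 2 / (γ : ℝ) ≤ 1 / (γ : ℝ) + μ)
    (X : V → V → ℝ)
    (hX0 : ∀ u v, ¬ G.Adj u v → X u v = 0)
    (hX1 : ∀ u v, G.Adj u v → 0 ≤ X u v ∧ X u v ≤ 1)
    (hXsum : ∀ u v, G.Adj u v → X u v + X v u = 1)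
    (hXγ : ∀ u v, G.Adj u v → ∃ m : ℤ, X u v = (m : ℝ) / γ)
    (hXload : ∀ v, ∑ u, X v u ≤ α') :
    ∃ (X' : V → V → ℝ) (H' : SimpleGraph V),
      (∀ u v, ¬ G.Adj u v → X' u v = 0) ∧
      (∀ u v, G.Adj u v → 0 ≤ X' u v ∧ X' u v ≤ 1) ∧
      (∀ u v, G.Adj u v → X' u v + X' v u = 1) ∧
      (∀ u v, G.Adj u v → ∃ m : ℤ, X' u v = (m : ℝ) / γ) ∧
      (∀ v, ∑ u, X' v u ≤ α') ∧
      (∀ v, ∑ u, X' v u = ∑ u, X v u) ∧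
      H' ≤ G ∧
      (∀ u v, G.Adj u v → X' u v ∈ Set.Ioo δ (1 - δ) → X' v u ∈ Set.Ioo δ (1 - δ) →
        H'.Adj u v) ∧
      (∀ u v, H'.Adj u v → X' u v ∈ Set.Icc (δ - μ) (1 - δ + μ)) ∧
      H'.IsAcyclic := by
  have hγinv : 0 < 1 / (γ : ℝ) := by positivity
  have hμ₀ : 0 ≤ μ := by linarith [show 2 / (γ : ℝ) = 1 / γ + 1 / γ by ring]
  have hδ : 1 / (γ : ℝ) < δ := by linarith
  obtain ⟨Y, hY, hload, hacyc⟩ :=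
    SimpleGraph.IsOrientation.exists_isAcyclic_undecidedGraph ⟨hX0, hX1, hXsum, hXγ⟩ hγ hδ
  refine ⟨Y, G.undecidedGraph δ Y, hY.1, hY.2, hY.3, hY.4,
    fun v => (hload v).trans_le (hXload v), hload, SimpleGraph.undecidedGraph_le,
    fun u v h h₁ h₂ => ⟨h, h₁, h₂⟩, fun u v h => ?_, hacyc⟩
  obtain ⟨-, ⟨h₁, h₂⟩, -⟩ := h
  exact ⟨by linarith, by linarith⟩

/-- Given a `(γ, α′)`-orientation `O` of `G` and parameters
`1 > δ > 1/γ + μ ≥ 2/γ > 0` with `δ - μ` an integer multiple of `1/γ`, there exists a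
`(γ, α′)`-orientation `O′` with the same vertex loads as `O` together with a `(δ, μ)`-refinement
`H′` of `G` with respect to `O′` that is a forest. -/
theorem stmt_5 {V : Type*} [Fintype V] [DecidableEq V]
    (G : SimpleGraph V)
    (γ : ℕ) (hγ : 1 ≤ γ)
    (α' : ℝ) (hα' : 0 < α')
    (δ μ : ℝ)
    (hδ1 : δ < 1) (hδ2 : 1 / (γ : ℝ) + μ < δ) (hμ : 2 / (γ : ℝ) ≤ 1 / (γ : ℝ) + μ)
    (hδμ : ∃ m : ℤ, δ - μ = (m : ℝ) / γ)
    (X : V → V → ℝ)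
    (hX0 : ∀ u v, ¬ G.Adj u v → X u v = 0)
    (hX1 : ∀ u v, G.Adj u v → 0 ≤ X u v ∧ X u v ≤ 1)
    (hXsum : ∀ u v, G.Adj u v → X u v + X v u = 1)
    (hXγ : ∀ u v, G.Adj u v → ∃ m : ℤ, X u v = (m : ℝ) / γ)
    (hXload : ∀ v, ∑ u, X v u ≤ α') :
    ∃ (X' : V → V → ℝ) (H' : SimpleGraph V),
      (∀ u v, ¬ G.Adj u v → X' u v = 0) ∧
      (∀ u v, G.Adj u v → 0 ≤ X' u v ∧ X' u v ≤ 1) ∧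
      (∀ u v, G.Adj u v → X' u v + X' v u = 1) ∧
      (∀ u v, G.Adj u v → ∃ m : ℤ, X' u v = (m : ℝ) / γ) ∧
      (∀ v, ∑ u, X' v u ≤ α') ∧
      (∀ v, ∑ u, X' v u = ∑ u, X v u) ∧
      H' ≤ G ∧
      (∀ u v, G.Adj u v → X' u v ∈ Set.Ioo δ (1 - δ) → X' v u ∈ Set.Ioo δ (1 - δ) →
        H'.Adj u v) ∧
      (∀ u v, H'.Adj u v → X' u v ∈ Set.Icc (δ - μ) (1 - δ + μ)) ∧
      H'.IsAcyclic :=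
  stmt_5_general G γ hγ α' δ μ hδ2 hμ X hX0 hX1 hXsum hXγ hXload
end

section
/- Let G be a finite simple graph with an orientation D, and let E(G) = P_1 ⊔ ⋯ ⊔ P_k be a partition of its edge set that is faithful to D, i.e., every vertex is the tail of at most one D-oriented edge in each P_i. Suppose i ≠ j, the edge uv ∈ P_i lies on a cycle of the graph (V(G), P_i), and the edge vw ∈ P_j lies on a cycle of the graph (V(G), P_j). Define P′_i = (P_i ∪ {vw}) \ {uv}, P′_j = (P_j ∪ {uv}) \ {vw}, and P′_l = P_l for l ≠ i, j. Then there exists an orientation D′ of G in which every vertex has the same out-degree as in D and such that the partition (P′_1, …, P′_k) is faithful to D′; in particular, every graph (V(G), P′_l) is a pseudoforest. -/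
/-!
If every vertex of a graph is the tail of at most one edge, every cycle is a directed cycle
(its orientation cannot turn around, because a vertex would then need two out-edges), and the
unique out-edge of a vertex on a cycle lies on that cycle. Consequently reversing a cycle keeps
all out-degrees and keeps the orientation faithful. Reverse the cycle of `P_i` through `uv`,
if needed, so that `v → u`, and then the cycle of `P_j` through `vw` so that `v → w`; the two
cycles lie in different parts, so the second reversal does not touch `P_i`. Now `vu` is the
only edge of `P_i` leaving `v`, so exchanging it for `vw` keeps `P_i` faithful, and
symmetrically for `P_j`.

Faithful parts are pseudoforests: following out-edges from the two ends of a path leads to a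
common vertex, so two cycles in one component share a vertex, and following out-edges around
the first cycle from that vertex stays on the second.
-/

open SimpleGraph Relation

/-- A graph is a pseudoforest if every connected component contains at most one cycle:
any two cycles lying in the same component have the same edge set. -/
def IsPseudoforest {V : Type*} (H : SimpleGraph V) : Prop :=
  ∀ ⦃u v : V⦄ (c : H.Walk u u) (d : H.Walk v v),
    c.IsCycle → d.IsCycle → H.Reachable u v → ∀ e, e ∈ c.edges ↔ e ∈ d.edges

section Orientation

variable {V : Type*}

structure IsFaithfulOrientation (H : SimpleGraph V) (o : V → V → Bool) : Prop where
  antisymm : ∀ ⦃x y⦄, H.Adj x y → (o x y = true ↔ o y x = false)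
  eq_of_out :
    ∀ ⦃x y y'⦄, H.Adj x y → H.Adj x y' → o x y = true → o x y' = true → y = y'

def OutAdj (H : SimpleGraph V) (o : V → V → Bool) (x y : V) : Prop :=
  H.Adj x y ∧ o x y = true

lemma exists_out_in_of_forward {H : SimpleGraph V} {o : V → V → Bool} {a x : V}
    {c : H.Walk a a} (hc : ¬ c.Nil) (hf : ∀ d ∈ c.darts, o d.fst d.snd = true)
    (hx : x ∈ c.support) :
    ∃ y z, o x y = true ∧ s(x, y) ∈ c.edges ∧ o z x = true ∧ s(x, z) ∈ c.edges := by
  have hx' : x ∈ c.support.tail := by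
    rcases c.mem_support_iff.1 hx with rfl | h
    · exact Walk.end_mem_tail_support hc
    · exact h
  have hx'' : x ∈ c.support.dropLast := c.tail_support_perm_dropLast_support.subset hx'
  rw [← Walk.map_snd_darts] at hx'
  rw [← Walk.map_fst_darts] at hx''
  obtain ⟨d, hd, rfl⟩ := List.mem_map.1 hx'
  obtain ⟨d', hd', hd'x⟩ := List.mem_map.1 hx''
  refine ⟨d'.snd, d.fst, hd'x ▸ hf d' hd', ?_, hf d hd, ?_⟩
  · rw [← hd'x]; exact List.mem_map_of_mem hd'
  · rw [Sym2.eq_swap]; exact List.mem_map_of_mem hd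

lemma reflTransGen_of_forward {H : SimpleGraph V} {o : V → V → Bool} {a b y : V}
    {p : H.Walk a b} (hp : ∀ d ∈ p.darts, o d.fst d.snd = true) (hy : y ∈ p.support) :
    ReflTransGen (OutAdj H o) a y := by
  induction p with
  | nil => simp_all [ReflTransGen.refl]
  | cons h q ih =>
    rw [Walk.support_cons, List.mem_cons] at hy
    rcases hy with rfl | hy
    · exact .refl
    · exact .head ⟨h, hp _ List.mem_cons_self⟩
        (ih (fun d hd => hp d (List.mem_cons_of_mem _ hd)) hy)

namespace IsFaithfulOrientation

variable {H : SimpleGraph V} {o : V → V → Bool}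

lemma out_or_out (ho : IsFaithfulOrientation H o) {x y : V} (h : H.Adj x y) :
    o x y = true ∨ o y x = true := by
  have := ho.antisymm h
  cases hxy : o x y <;> cases hyx : o y x <;> simp_all

lemma forward_or_exists_out_of_isPath (ho : IsFaithfulOrientation H o) {a b : V}
    {p : H.Walk a b} (hp : p.IsPath) :
    (∀ d ∈ p.darts, o d.fst d.snd = true) ∨ ∃ y, o b y = true ∧ s(b, y) ∈ p.edges := by
  induction p with
  | nil => simp
  | @cons a x b h q ih =>
    rw [Walk.cons_isPath_iff] at hp
    rcases ih hp.1 with hq | ⟨y, hy, hyq⟩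
    · by_cases hax : o a x = true
      · left
        simpa [hax] using hq
      · have hxa : o x a = true := (ho.out_or_out h).resolve_left hax
        cases q with
        | nil => exact Or.inr ⟨a, hxa, by simp [Sym2.eq_swap]⟩
        | cons h' r =>
          -- `x` points back to `a`, so it cannot also point forward along `q`
          have := ho.eq_of_out h.symm h' hxa (hq ⟨(x, _), h'⟩ (by simp))
          exact absurd (by simp [this]) hp.2
    · exact Or.inr ⟨y, hy, by simp [hyq]⟩

lemma forward_or_backward_of_isCycle (ho : IsFaithfulOrientation H o) {a : V} {c : H.Walk a a}
    (hc : c.IsCycle) :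
    (∀ d ∈ c.darts, o d.fst d.snd = true) ∨ ∀ d ∈ c.darts, o d.snd d.fst = true := by
  cases c with
  | nil => exact absurd rfl hc.ne_nil
  | @cons _ b _ h p =>
    rw [Walk.cons_isCycle_iff] at hc
    rcases ho.out_or_out h with hab | hba
    · rcases ho.forward_or_exists_out_of_isPath hc.1 with hp | ⟨y, hy, hyp⟩
      · left
        simpa [hab] using hp
      · rw [ho.eq_of_out (p.adj_of_mem_edges hyp) h hy hab] at hyp
        exact absurd hyp hc.2
    · rcases ho.forward_or_exists_out_of_isPath hc.1.reverse with hp | ⟨y, hy, hyp⟩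
      · right
        intro d hd
        rw [Walk.darts_cons, List.mem_cons] at hd
        rcases hd with rfl | hd
        · exact hba
        · exact hp d.symm (Walk.mem_darts_reverse.2 (by simpa using hd))
      · rw [Walk.edges_reverse, List.mem_reverse] at hyp
        rw [ho.eq_of_out (p.adj_of_mem_edges hyp) h.symm hy hba, Sym2.eq_swap] at hyp
        exact absurd hyp hc.2

lemma exists_out_in (ho : IsFaithfulOrientation H o) {a x : V} {c : H.Walk a a}
    (hc : c.IsCycle) (hx : x ∈ c.support) :
    ∃ y z, o x y = true ∧ s(x, y) ∈ c.edges ∧ o z x = true ∧ s(x, z) ∈ c.edges := by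
  rcases ho.forward_or_backward_of_isCycle hc with hf | hb
  · exact exists_out_in_of_forward hc.not_nil hf hx
  · obtain ⟨y, z, hy, hyc, hz, hzc⟩ := exists_out_in_of_forward (c := c.reverse)
      (by simpa using hc.not_nil) (fun d hd => hb d.symm (Walk.mem_darts_reverse.1 hd))
      (by simpa using hx)
    exact ⟨y, z, hy, by simpa using hyc, hz, by simpa using hzc⟩

lemma mem_edges_of_out (ho : IsFaithfulOrientation H o) {a x y : V} {c : H.Walk a a}
    (hc : c.IsCycle) (hx : x ∈ c.support) (h : H.Adj x y) (hxy : o x y = true) :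
    s(x, y) ∈ c.edges := by
  obtain ⟨y', -, hy', hy'c, -⟩ := ho.exists_out_in hc hx
  rwa [ho.eq_of_out h (c.adj_of_mem_edges hy'c) hxy hy']

lemma exists_out_in_unique (ho : IsFaithfulOrientation H o) {a x : V} {c : H.Walk a a}
    (hc : c.IsCycle) (hx : x ∈ c.support) :
    ∃ y z, o x y = true ∧ o z x = true ∧ ∀ w, s(x, w) ∈ c.edges ↔ w = y ∨ w = z := by
  obtain ⟨y, z, hy, hyc, hz, hzc⟩ := ho.exists_out_in hc hx
  have hyz : y ≠ z := by
    rintro rfl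
    simp [(ho.antisymm (c.adj_of_mem_edges hyc)).1 hy] at hz
  have hN : c.toSubgraph.neighborSet x = {y, z} := by
    have h2 := hc.ncard_neighborSet_toSubgraph_eq_two hx
    refine (Set.eq_of_subset_of_ncard_le ?_ ?_ (Set.finite_of_ncard_ne_zero (by omega))).symm
    · simp [Set.insert_subset_iff, Walk.adj_toSubgraph_iff_mem_edges, hyc, hzc]
    · rw [h2, Set.ncard_pair hyz]
  refine ⟨y, z, hy, hz, fun w => ?_⟩
  rw [← Walk.adj_toSubgraph_iff_mem_edges, ← Subgraph.mem_neighborSet, hN]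
  rfl

lemma eq_of_in_of_mem_edges (ho : IsFaithfulOrientation H o) {a x w w' : V} {c : H.Walk a a}
    (hc : c.IsCycle) (hw : s(x, w) ∈ c.edges) (hw' : s(x, w') ∈ c.edges)
    (h : o w x = true) (h' : o w' x = true) : w = w' := by
  obtain ⟨y, z, hy, -, hchar⟩ := ho.exists_out_in_unique hc (c.fst_mem_support_of_mem_edges hw)
  have hyx : o y x = false := (ho.antisymm ((c.adj_of_mem_edges
    ((hchar y).2 (Or.inl rfl))))).1 hy
  rcases (hchar w).1 hw with rfl | rfl <;> rcases (hchar w').1 hw' with rfl | rfl <;>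
    simp_all

lemma mem_support_of_reflTransGen (ho : IsFaithfulOrientation H o) {a x y : V}
    {c : H.Walk a a} (hc : c.IsCycle) (hx : x ∈ c.support)
    (h : ReflTransGen (OutAdj H o) x y) : y ∈ c.support := by
  induction h with
  | refl => exact hx
  | tail _ hyz ih =>
    exact c.snd_mem_support_of_mem_edges (ho.mem_edges_of_out hc ih hyz.1 hyz.2)

lemma reflTransGen_of_mem_support (ho : IsFaithfulOrientation H o) {a x y : V}
    {c : H.Walk a a} (hc : c.IsCycle) (hx : x ∈ c.support) (hy : y ∈ c.support) :
    ReflTransGen (OutAdj H o) x y := by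
  classical
  have hy' : y ∈ (c.rotate x hx).support := (c.mem_support_rotate_iff x hx).2 hy
  rcases ho.forward_or_backward_of_isCycle (hc.rotate hx) with hf | hb
  · exact reflTransGen_of_forward hf hy'
  · exact reflTransGen_of_forward (p := (c.rotate x hx).reverse)
      (fun d hd => hb d.symm (Walk.mem_darts_reverse.1 hd)) (by simpa using hy')

lemma exists_reflTransGen_of_reachable (ho : IsFaithfulOrientation H o) {x y : V}
    (h : H.Reachable x y) :
    ∃ z, ReflTransGen (OutAdj H o) x z ∧ ReflTransGen (OutAdj H o) y z := by
  obtain ⟨p⟩ := h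
  induction p with
  | nil => exact ⟨_, .refl, .refl⟩
  | @cons x x' y h q ih =>
    obtain ⟨z, hx'z, hyz⟩ := ih
    rcases ho.out_or_out h with hxx' | hx'x
    · exact ⟨z, .head ⟨h, hxx'⟩ hx'z, hyz⟩
    · -- the path from `x'` to `z` starts with its unique out-edge, which goes to `x`
      rcases hx'z.cases_head with rfl | ⟨m, hm, hmz⟩
      · exact ⟨x, .refl, hyz.tail ⟨h.symm, hx'x⟩⟩
      · rw [ho.eq_of_out hm.1 h.symm hm.2 hx'x] at hmz
        exact ⟨z, hmz, hyz⟩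

lemma edges_subset_of_support_subset (ho : IsFaithfulOrientation H o) {a b a' : V}
    {c : H.Walk a b} {d : H.Walk a' a'} (hd : d.IsCycle)
    (h : ∀ y ∈ c.support, y ∈ d.support) : ∀ e ∈ c.edges, e ∈ d.edges := by
  intro e he
  induction e using Sym2.ind with
  | _ x y =>
    rcases ho.out_or_out (c.adj_of_mem_edges he) with hxy | hyx
    · exact ho.mem_edges_of_out hd (h x (c.fst_mem_support_of_mem_edges he))
        (c.adj_of_mem_edges he) hxy
    · rw [Sym2.eq_swap]
      exact ho.mem_edges_of_out hd (h y (c.snd_mem_support_of_mem_edges he))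
        (c.adj_of_mem_edges he).symm hyx

lemma edges_subset_of_reachable (ho : IsFaithfulOrientation H o) {a b : V}
    {c : H.Walk a a} {d : H.Walk b b} (hc : c.IsCycle) (hd : d.IsCycle)
    (hr : H.Reachable a b) : ∀ e ∈ c.edges, e ∈ d.edges := by
  obtain ⟨z, haz, hbz⟩ := ho.exists_reflTransGen_of_reachable hr
  have hzc := ho.mem_support_of_reflTransGen hc c.start_mem_support haz
  have hzd := ho.mem_support_of_reflTransGen hd d.start_mem_support hbz
  exact ho.edges_subset_of_support_subset hd fun y hy =>
    ho.mem_support_of_reflTransGen hd hzd (ho.reflTransGen_of_mem_support hc hzc hy)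

theorem isPseudoforest (ho : IsFaithfulOrientation H o) : IsPseudoforest H :=
  fun _ _ _ _ hc hd hr e =>
    ⟨ho.edges_subset_of_reachable hc hd hr e, ho.edges_subset_of_reachable hd hc hr.symm e⟩

end IsFaithfulOrientation

open Classical in
noncomputable def reverseOn (o : V → V → Bool) (E : Set (Sym2 V)) : V → V → Bool :=
  fun x y => if s(x, y) ∈ E then o y x else o x y

section reverseOn

variable {o : V → V → Bool} {E : Set (Sym2 V)} {x y : V}

lemma reverseOn_of_mem (h : s(x, y) ∈ E) : reverseOn o E x y = o y x := if_pos h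

lemma reverseOn_of_notMem (h : s(x, y) ∉ E) : reverseOn o E x y = o x y := if_neg h

lemma reverseOn_antisymm {G : SimpleGraph V}
    (ho : ∀ ⦃x y⦄, G.Adj x y → (o x y = true ↔ o y x = false)) (h : G.Adj x y) :
    reverseOn o E x y = true ↔ reverseOn o E y x = false := by
  by_cases hxy : s(x, y) ∈ E
  · rw [reverseOn_of_mem hxy, reverseOn_of_mem (Sym2.eq_swap ▸ hxy)]
    exact ho h.symm
  · rw [reverseOn_of_notMem hxy, reverseOn_of_notMem (Sym2.eq_swap ▸ hxy)]
    exact ho h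

end reverseOn

namespace IsFaithfulOrientation

variable {H : SimpleGraph V} {o : V → V → Bool}

lemma reverseOn (ho : IsFaithfulOrientation H o) {a : V} {c : H.Walk a a} (hc : c.IsCycle) :
    IsFaithfulOrientation H (_root_.reverseOn o {e | e ∈ c.edges}) where
  antisymm _ _ h := reverseOn_antisymm ho.antisymm h
  eq_of_out x y y' h h' hy hy' := by
    by_cases hm : s(x, y) ∈ c.edges <;> by_cases hm' : s(x, y') ∈ c.edges
    · rw [reverseOn_of_mem hm] at hy
      rw [reverseOn_of_mem hm'] at hy'
      exact ho.eq_of_in_of_mem_edges hc hm hm' hy hy'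
    · rw [reverseOn_of_notMem hm'] at hy'
      exact absurd (ho.mem_edges_of_out hc (c.fst_mem_support_of_mem_edges hm) h' hy') hm'
    · rw [reverseOn_of_notMem hm] at hy
      exact absurd (ho.mem_edges_of_out hc (c.fst_mem_support_of_mem_edges hm') h hy) hm
    · rw [reverseOn_of_notMem hm] at hy
      rw [reverseOn_of_notMem hm'] at hy'
      exact ho.eq_of_out h h' hy hy'

end IsFaithfulOrientation

def outDegree [Fintype V] (o : V → V → Bool) (x : V) : ℕ :=
  (Finset.univ.filter fun y => o x y = true).card

lemma IsFaithfulOrientation.outDegree_reverseOn [Fintype V] {H : SimpleGraph V}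
    {o : V → V → Bool} (ho : IsFaithfulOrientation H o) {a : V} {c : H.Walk a a}
    (hc : c.IsCycle) (x : V) :
    outDegree (_root_.reverseOn o {e | e ∈ c.edges}) x = outDegree o x := by
  classical
  by_cases hx : x ∈ c.support
  · -- reversing the cycle trades the out-neighbour `y` of `x` on it for the in-neighbour `z`
    obtain ⟨y, z, hy, hz, hchar⟩ := ho.exists_out_in_unique hc hx
    have hyx : o y x = false :=
      (ho.antisymm (c.adj_of_mem_edges ((hchar y).2 (Or.inl rfl)))).1 hy
    have hxz : o x z = false :=
      (ho.antisymm (c.adj_of_mem_edges ((hchar z).2 (Or.inr rfl))).symm).1 hz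
    refine Finset.card_equiv (Equiv.swap y z) fun w => ?_
    simp only [Finset.mem_filter, Finset.mem_univ, true_and]
    by_cases hw : s(x, w) ∈ c.edges
    · rw [reverseOn_of_mem hw]
      rcases (hchar w).1 hw with rfl | rfl <;> simp [*]
    · have hwy : w ≠ y := fun h => hw ((hchar w).2 (Or.inl h))
      have hwz : w ≠ z := fun h => hw ((hchar w).2 (Or.inr h))
      rw [reverseOn_of_notMem hw, Equiv.swap_apply_of_ne_of_ne hwy hwz]
  · unfold outDegree
    congr 1
    refine Finset.filter_congr fun y _ => ?_
    rw [reverseOn_of_notMem (fun h => hx (c.fst_mem_support_of_mem_edges h))]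

structure IsOrientation (G : SimpleGraph V) (o : V → V → Bool) : Prop where
  adj : ∀ x y, o x y = true → G.Adj x y
  antisymm : ∀ x y, G.Adj x y → (o x y = true ↔ o y x = false)

lemma IsOrientation.reverseOn {G : SimpleGraph V} {o : V → V → Bool} (hG : IsOrientation G o)
    (E : Set (Sym2 V)) : IsOrientation G (_root_.reverseOn o E) where
  adj x y h := by
    by_cases hxy : s(x, y) ∈ E
    · rw [reverseOn_of_mem hxy] at h
      exact (hG.adj y x h).symm
    · rw [reverseOn_of_notMem hxy] at h
      exact hG.adj x y h
  antisymm _ _ h := reverseOn_antisymm hG.antisymm h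

def FaithfulOn (o : V → V → Bool) (P : Set (Sym2 V)) : Prop :=
  ∀ x y y', o x y = true → o x y' = true → s(x, y) ∈ P → s(x, y') ∈ P → y = y'

namespace FaithfulOn

variable {G : SimpleGraph V} {o : V → V → Bool} {P : Set (Sym2 V)}

lemma isFaithfulOrientation (h : FaithfulOn o P) (hG : IsOrientation G o)
    (hP : P ⊆ G.edgeSet) : IsFaithfulOrientation (fromEdgeSet P) o where
  antisymm x y hxy := hG.antisymm x y (hP ((fromEdgeSet_adj P).1 hxy).1)
  eq_of_out x y y' hy hy' h1 h2 :=
    h x y y' h1 h2 ((fromEdgeSet_adj P).1 hy).1 ((fromEdgeSet_adj P).1 hy').1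

lemma congr (h : FaithfulOn o P) {o' : V → V → Bool}
    (heq : ∀ x y, s(x, y) ∈ P → o' x y = o x y) : FaithfulOn o' P :=
  fun x y y' h1 h2 hy hy' => h x y y' (heq x y hy ▸ h1) (heq x y' hy' ▸ h2) hy hy'

lemma exchange (h : FaithfulOn o P) {v a b : V} (ha : s(v, a) ∈ P) (hva : o v a = true)
    (hvb : o v b = true) (hbv : o b v = false) :
    FaithfulOn o ((P ∪ {s(v, b)}) \ {s(v, a)}) := by
  have hmem : ∀ {x y}, o x y = true → s(x, y) ∈ (P ∪ {s(v, b)}) \ {s(v, a)} →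
      s(x, y) ∈ P ∧ x ≠ v ∨ x = v ∧ y = b := by
    rintro x y hxy ⟨hy | hy, hya⟩
    · refine Or.inl ⟨hy, ?_⟩
      rintro rfl
      exact hya (by rw [h x y a hxy hva hy ha]; rfl)
    · rcases Sym2.eq_iff.1 hy with ⟨rfl, rfl⟩ | ⟨rfl, rfl⟩
      · exact Or.inr ⟨rfl, rfl⟩
      · simp [hbv] at hxy
  intro x y y' h1 h2 hy hy'
  rcases hmem h1 hy with ⟨hy, hx⟩ | ⟨hx, rfl⟩ <;>
    rcases hmem h2 hy' with ⟨hy', hx'⟩ | ⟨hx', rfl⟩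
  · exact h x y y' h1 h2 hy hy'
  · exact absurd hx' hx
  · exact absurd hx hx'
  · rfl

end FaithfulOn

lemma IsFaithfulOrientation.faithfulOn {G : SimpleGraph V} {o : V → V → Bool}
    {P : Set (Sym2 V)} (ho : IsFaithfulOrientation (fromEdgeSet P) o) (hP : P ⊆ G.edgeSet) :
    FaithfulOn o P := fun _ _ _ h1 h2 hy hy' =>
  ho.eq_of_out ((fromEdgeSet_adj P).2 ⟨hy, (G.mem_edgeSet.1 (hP hy)).ne⟩)
    ((fromEdgeSet_adj P).2 ⟨hy', (G.mem_edgeSet.1 (hP hy')).ne⟩) h1 h2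

lemma mem_of_mem_edges_fromEdgeSet {P : Set (Sym2 V)} {a b : V}
    {c : (fromEdgeSet P).Walk a b} {e : Sym2 V} (he : e ∈ c.edges) : e ∈ P := by
  have := c.edges_subset_edgeSet he
  rw [edgeSet_fromEdgeSet] at this
  exact this.1

lemma exists_reorientation [Fintype V] {G : SimpleGraph V} {o : V → V → Bool}
    {P : Set (Sym2 V)} {a u v : V} {c : (fromEdgeSet P).Walk a a}
    (hG : IsOrientation G o) (hP : P ⊆ G.edgeSet) (hf : FaithfulOn o P) (hc : c.IsCycle)
    (huv : s(u, v) ∈ c.edges) :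
    ∃ o', IsOrientation G o' ∧ (∀ x, outDegree o' x = outDegree o x) ∧
      (∀ x y, s(x, y) ∉ P → o' x y = o x y) ∧ FaithfulOn o' P ∧ o' v u = true := by
  have ho := hf.isFaithfulOrientation hG hP
  by_cases hvu : o v u = true
  · exact ⟨o, hG, fun _ => rfl, fun _ _ _ => rfl, hf, hvu⟩
  refine ⟨reverseOn o {e | e ∈ c.edges}, hG.reverseOn _, ho.outDegree_reverseOn hc,
    fun x y hxy => reverseOn_of_notMem fun h => hxy (mem_of_mem_edges_fromEdgeSet h),
    (ho.reverseOn hc).faithfulOn hP, ?_⟩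
  rw [reverseOn_of_mem (show s(v, u) ∈ c.edges from Sym2.eq_swap ▸ huv)]
  exact (ho.out_or_out (c.adj_of_mem_edges huv)).resolve_right hvu

end Orientation

theorem stmt_10_general {V : Type*} [Fintype V]
    (G : SimpleGraph V) (k : ℕ)
    (o : V → V → Bool)
    (ho1 : ∀ x y, o x y = true → G.Adj x y)
    (ho2 : ∀ x y, G.Adj x y → (o x y = true ↔ o y x = false))
    (P : Fin k → Set (Sym2 V))
    (hPsub : ∀ l, P l ⊆ G.edgeSet)
    (hPpart : ∀ e ∈ G.edgeSet, ∃! l, e ∈ P l)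
    (hfaith : ∀ (l : Fin k) (x y y' : V), o x y = true → o x y' = true →
      s(x, y) ∈ P l → s(x, y') ∈ P l → y = y')
    (i j : Fin k) (hij : i ≠ j)
    (u v w : V)
    (huv : s(u, v) ∈ P i) (hvw : s(v, w) ∈ P j)
    (hcyci : ∃ (x : V) (c : (SimpleGraph.fromEdgeSet (P i)).Walk x x),
      c.IsCycle ∧ s(u, v) ∈ c.edges)
    (hcycj : ∃ (x : V) (c : (SimpleGraph.fromEdgeSet (P j)).Walk x x),
      c.IsCycle ∧ s(v, w) ∈ c.edges)
    (P' : Fin k → Set (Sym2 V))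
    (hP' : ∀ l, P' l = if l = i then (P i ∪ {s(v, w)}) \ {s(u, v)}
      else if l = j then (P j ∪ {s(u, v)}) \ {s(v, w)} else P l) :
    ∃ o' : V → V → Bool,
      (∀ x y, o' x y = true → G.Adj x y) ∧
      (∀ x y, G.Adj x y → (o' x y = true ↔ o' y x = false)) ∧
      (∀ x, (Finset.univ.filter (fun y => o' x y = true)).card
          = (Finset.univ.filter (fun y => o x y = true)).card) ∧
      (∀ (l : Fin k) (x y y' : V), o' x y = true → o' x y' = true →
        s(x, y) ∈ P' l → s(x, y') ∈ P' l → y = y') ∧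
      (∀ l, IsPseudoforest (SimpleGraph.fromEdgeSet (P' l))) := by
  obtain ⟨_, ci, hci, huvci⟩ := hcyci
  obtain ⟨_, cj, hcj, hvwcj⟩ := hcycj
  have hdisj : ∀ {l m e}, e ∈ P l → e ∈ P m → l = m :=
    fun hl hm => (hPpart _ (hPsub _ hl)).unique hl hm
  obtain ⟨o₁, hG₁, hdeg₁, hoff₁, hfi₁, hvu₁⟩ :=
    exists_reorientation ⟨ho1, ho2⟩ (hPsub i) (hfaith i) hci huvci
  obtain ⟨o₂, hG₂, hdeg₂, hoff₂, hfj₂, hvw₂⟩ := exists_reorientation hG₁ (hPsub j)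
    (FaithfulOn.congr (hfaith j) fun x y h => hoff₁ x y fun h' => hij (hdisj h' h))
    hcj (by rwa [Sym2.eq_swap] at hvwcj)
  have hvu : s(v, u) ∈ P i := Sym2.eq_swap ▸ huv
  have hfi₂ : FaithfulOn o₂ (P i) :=
    hfi₁.congr fun x y h => hoff₂ x y fun h' => hij (hdisj h h')
  have hvu₂ : o₂ v u = true := (hoff₂ v u fun h => hij (hdisj hvu h)).trans hvu₁
  have hwv₂ : o₂ w v = false := (hG₂.antisymm v w (hPsub j hvw)).1 hvw₂
  have huv₂ : o₂ u v = false := (hG₂.antisymm v u (hPsub i hvu)).1 hvu₂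
  have hP'' : ∀ l, P' l ⊆ G.edgeSet ∧ FaithfulOn o₂ (P' l) := by
    intro l
    rw [hP' l, show s(u, v) = s(v, u) from Sym2.eq_swap]
    split_ifs with hli hlj
    · exact ⟨Set.sdiff_subset.trans (Set.union_subset (hPsub i) (by simpa using hPsub j hvw)),
        hfi₂.exchange hvu hvu₂ hvw₂ hwv₂⟩
    · exact ⟨Set.sdiff_subset.trans (Set.union_subset (hPsub j) (by simpa using hPsub i hvu)),
        hfj₂.exchange hvw hvw₂ hvu₂ huv₂⟩
    · refine ⟨hPsub l, FaithfulOn.congr (hfaith l) fun x y h => ?_⟩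
      rw [hoff₂ x y fun h' => hlj (hdisj h h'), hoff₁ x y fun h' => hli (hdisj h h')]
  exact ⟨o₂, hG₂.adj, hG₂.antisymm, fun x => (hdeg₂ x).trans (hdeg₁ x),
    fun l => (hP'' l).2,
    fun l => ((hP'' l).2.isFaithfulOrientation hG₂ (hP'' l).1).isPseudoforest⟩

/-- Let `P_1 ⊔ ⋯ ⊔ P_k` be a partition of `E(G)` faithful to an orientation
`D`. If `i ≠ j`, `uv ∈ P_i` lies on a cycle of `(V, P_i)` and `vw ∈ P_j` lies on a cycle of
`(V, P_j)`, then after swapping `uv` and `vw` between `P_i` and `P_j` there is an orientation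
`D′` with the same out-degrees as `D` to which the new partition is faithful; in particular
every new part spans a pseudoforest. -/
theorem stmt_10 {V : Type*} [Fintype V] [DecidableEq V]
    (G : SimpleGraph V) (k : ℕ)
    (o : V → V → Bool)
    (ho1 : ∀ x y, o x y = true → G.Adj x y)
    (ho2 : ∀ x y, G.Adj x y → (o x y = true ↔ o y x = false))
    (P : Fin k → Set (Sym2 V))
    (hPsub : ∀ l, P l ⊆ G.edgeSet)
    (hPpart : ∀ e ∈ G.edgeSet, ∃! l, e ∈ P l)
    (hfaith : ∀ (l : Fin k) (x y y' : V), o x y = true → o x y' = true →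
      s(x, y) ∈ P l → s(x, y') ∈ P l → y = y')
    (i j : Fin k) (hij : i ≠ j)
    (u v w : V)
    (huv : s(u, v) ∈ P i) (hvw : s(v, w) ∈ P j)
    (hcyci : ∃ (x : V) (c : (SimpleGraph.fromEdgeSet (P i)).Walk x x),
      c.IsCycle ∧ s(u, v) ∈ c.edges)
    (hcycj : ∃ (x : V) (c : (SimpleGraph.fromEdgeSet (P j)).Walk x x),
      c.IsCycle ∧ s(v, w) ∈ c.edges)
    (P' : Fin k → Set (Sym2 V))
    (hP' : ∀ l, P' l = if l = i then (P i ∪ {s(v, w)}) \ {s(u, v)}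
      else if l = j then (P j ∪ {s(u, v)}) \ {s(v, w)} else P l) :
    ∃ o' : V → V → Bool,
      (∀ x y, o' x y = true → G.Adj x y) ∧
      (∀ x y, G.Adj x y → (o' x y = true ↔ o' y x = false)) ∧
      (∀ x, (Finset.univ.filter (fun y => o' x y = true)).card
          = (Finset.univ.filter (fun y => o x y = true)).card) ∧
      (∀ (l : Fin k) (x y y' : V), o' x y = true → o' x y' = true →
        s(x, y) ∈ P' l → s(x, y') ∈ P' l → y = y') ∧
      (∀ l, IsPseudoforest (SimpleGraph.fromEdgeSet (P' l))) :=
  stmt_10_general G k o ho1 ho2 P hPsub hPpart hfaith i j hij u v w huv hvw hcyci hcycj P' hP'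
end

section
/- Let D be an acyclic orientation of a finite simple graph G (no directed cycle), let u be a vertex, and let D′ be the orientation obtained from D by reversing every edge oriented away from u (so that u becomes a sink). Then D′ is acyclic. -/
/-- An orientation (given by `o x y = true` iff the edge `xy` is oriented `x → y`) is acyclic
if it admits no directed cycle, i.e. no closed directed walk of positive length. -/
def HasNoDirectedCycle {V : Type*} (o : V → V → Bool) : Prop :=
  ¬ ∃ (m : ℕ) (f : ℕ → V), 1 ≤ m ∧ f 0 = f m ∧ ∀ i < m, o (f i) (f (i + 1)) = true

/-- If `D` is an acyclic orientation of `G` and `D′` is obtained from `D` by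
reversing every edge oriented away from a vertex `u` (making `u` a sink), then `D′` is
acyclic. -/
theorem stmt_11 {V : Type*} [DecidableEq V]
    (G : SimpleGraph V)
    (o : V → V → Bool)
    (ho1 : ∀ x y, o x y = true → G.Adj x y)
    (ho2 : ∀ x y, G.Adj x y → (o x y = true ↔ o y x = false))
    (hacyc : HasNoDirectedCycle o)
    (u : V)
    (o' : V → V → Bool)
    (ho' : ∀ x y, o' x y =
      (if x = u then false else if y = u then (o x y || o y x) else o x y)) :
    HasNoDirectedCycle o' := by
  rintro ⟨m, f, hm, hfm, hstep⟩
  -- no vertex of the cycle is `u`, since `u` has no outgoing edge in `o'`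
  have hne : ∀ i ≤ m, f i ≠ u := by
    intro i hi
    rcases lt_or_eq_of_le hi with h | h
    · intro heq
      have := hstep i h
      rw [ho', heq, if_pos rfl] at this
      exact Bool.false_ne_true this
    · subst h
      intro heq
      have h0 : f 0 = u := hfm.trans heq
      have := hstep 0 hm
      rw [ho', h0, if_pos rfl] at this
      exact Bool.false_ne_true this
  refine hacyc ⟨m, f, hm, hfm, fun i hi => ?_⟩
  have := hstep i hi
  rw [ho', if_neg (hne i (le_of_lt hi)), if_neg (hne (i + 1) hi)] at this
  exact this
end

section
/- Let T be a finite tree and let D_1, D_2 be two orientations of T in each of which every vertex has out-degree at most 1, with unique out-degree-0 vertices r_1 and r_2 respectively. Then the set of edges on which D_1 and D_2 disagree is exactly the edge set of the unique path in T from r_1 to r_2; in particular, D_1 and D_2 orient exactly dist_T(r_1, r_2) edges differently. -/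
/-!
An orientation of a tree with out-degrees at most one and a sink `r` points every edge towards
`r`: by induction on `d(x, r)`, the first edge of the path from `x` to `r` must be the out-edge
of `x`, since otherwise it would point at `x` from a vertex closer to `r`. Hence `D₁` and `D₂`
disagree on an edge `xy` exactly when stepping from `x` to `y` approaches `r₁` while it moves
away from `r₂`, and in a tree this happens exactly for the edges of the path from `r₁` to `r₂`.
-/

open Finset

namespace SimpleGraph

variable {V : Type*} {G : SimpleGraph V}

theorem IsAcyclic.length_eq_dist (hG : G.IsAcyclic) {u v : V} {p : G.Walk u v} (hp : p.IsPath) :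
    p.length = G.dist u v := by
  obtain ⟨q, hq, hql⟩ := p.reachable.exists_path_of_dist
  rw [← hql, Subtype.mk.inj (hG.subsingleton_path u v |>.elim ⟨p, hp⟩ ⟨q, hq⟩)]

theorem IsAcyclic.dist_add_dist_of_mem_support (hG : G.IsAcyclic) {u v w : V} {p : G.Walk u v}
    (hp : p.IsPath) (hw : w ∈ p.support) : G.dist u w + G.dist w v = G.dist u v := by
  classical
  have h := congrArg Walk.length (p.take_spec hw)
  rwa [Walk.length_append, hG.length_eq_dist (hp.takeUntil hw),
    hG.length_eq_dist (hp.dropUntil hw), hG.length_eq_dist hp] at h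

theorem IsTree.dist_eq_dist_add_one_or (hG : G.IsTree) (r : V) {x y : V} (h : G.Adj x y) :
    G.dist x r = G.dist y r + 1 ∨ G.dist y r = G.dist x r + 1 := by
  obtain ⟨p, hp, hpl⟩ := hG.connected.exists_path_of_dist x r
  by_cases hy : y ∈ p.support
  · have := hG.isAcyclic.dist_add_dist_of_mem_support hp hy
    have := dist_eq_one_iff_adj.mpr h
    omega
  · have := hG.isAcyclic.length_eq_dist (hp.cons (h := h.symm) hy)
    rw [Walk.length_cons, hpl] at this
    omega

theorem IsTree.mem_edges_of_dist (hG : G.IsTree) {u v x y : V} (hadj : G.Adj x y)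
    (hu : G.dist y u = G.dist x u + 1) (hv : G.dist x v = G.dist y v + 1)
    {p : G.Walk u v} (hp : p.IsPath) : s(x, y) ∈ p.edges := by
  obtain ⟨q₁, hq₁, -⟩ := hG.connected.exists_path_of_dist u x
  obtain ⟨q₂, hq₂, -⟩ := hG.connected.exists_path_of_dist y v
  -- a vertex `w` on both paths would satisfy `d(u,w) ≤ d(u,x)` and `d(w,v) ≤ d(y,v)`,
  -- forcing the triangle inequality through `w` to give `d(y,u) ≤ d(x,u)`
  have hdisj : ∀ w ∈ q₁.support, w ∉ q₂.support := by
    intro w hw₁ hw₂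
    have := hG.isAcyclic.dist_add_dist_of_mem_support hq₁ hw₁
    have := hG.isAcyclic.dist_add_dist_of_mem_support hq₂ hw₂
    have := hG.connected.dist_triangle (u := y) (v := w) (w := u)
    have := hG.connected.dist_triangle (u := x) (v := w) (w := v)
    have : G.dist x u = G.dist u x := dist_comm
    have : G.dist w u = G.dist u w := dist_comm
    have : G.dist x w = G.dist w x := dist_comm
    omega
  have hq : (q₁.append (.cons hadj q₂)).IsPath := by
    rw [Walk.isPath_def, Walk.support_append, Walk.support_cons, List.tail_cons,
      List.nodup_append]
    exact ⟨hq₁.support_nodup, hq₂.support_nodup, fun w hw₁ _ hw₂ hw => hdisj w hw₁ (hw ▸ hw₂)⟩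
  rw [← Subtype.mk.inj (hG.isAcyclic.subsingleton_path u v |>.elim ⟨_, hq⟩ ⟨p, hp⟩)]
  simp

theorem IsTree.mem_edges_iff_dist_lt (hG : G.IsTree) {u v x y : V} {p : G.Walk u v}
    (hp : p.IsPath) (hadj : G.Adj x y) :
    s(x, y) ∈ p.edges ↔ (G.dist y u < G.dist x u ↔ G.dist x v < G.dist y v) := by
  have hxu := hG.dist_eq_dist_add_one_or u hadj
  have hxv := hG.dist_eq_dist_add_one_or v hadj
  constructor
  · intro he
    have := hG.isAcyclic.dist_add_dist_of_mem_support hp (p.fst_mem_support_of_mem_edges he)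
    have := hG.isAcyclic.dist_add_dist_of_mem_support hp (p.snd_mem_support_of_mem_edges he)
    have : G.dist x u = G.dist u x := dist_comm
    have : G.dist y u = G.dist u y := dist_comm
    omega
  · intro h
    rcases hxu with hxu | hxu
    · rw [Sym2.eq_swap]
      exact hG.mem_edges_of_dist hadj.symm hxu (by omega) hp
    · exact hG.mem_edges_of_dist hadj hxu (by omega) hp

section Orientation

variable [Fintype V] {o : V → V → Bool}

theorem IsTree.dist_add_one_eq_of_orient (hG : G.IsTree)
    (hb : ∀ x y, G.Adj x y → (o x y = true ↔ o y x = false))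
    (hdeg : ∀ x, #{y | o x y = true} ≤ 1) {r : V} (hr : ∀ w, o r w = false) {x y : V}
    (hxy : o x y = true) : G.dist y r + 1 = G.dist x r := by
  induction hn : G.dist x r using Nat.strong_induction_on generalizing x y with
  | _ n ih =>
    have hxr : x ≠ r := by rintro rfl; simp [hr] at hxy
    obtain ⟨p, hp, hpl⟩ := hG.connected.exists_path_of_dist x r
    obtain ⟨z, hxz, q, rfl⟩ := Walk.exists_eq_cons_of_ne hxr p
    have hz : G.dist z r + 1 = n := by
      rw [← hG.isAcyclic.length_eq_dist hp.of_cons, ← hn, ← hpl, Walk.length_cons]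
    obtain rfl | hyz := eq_or_ne y z
    · exact hz
    · have hxz' : o x z = false := by
        by_contra h
        exact hyz (card_le_one.mp (hdeg x) y (by simpa) z (by simpa using h))
      have := ih _ (by omega) ((hb z x hxz.symm).mpr hxz') rfl
      omega

theorem IsTree.orient_iff_dist_lt (hG : G.IsTree)
    (hb : ∀ x y, G.Adj x y → (o x y = true ↔ o y x = false))
    (hdeg : ∀ x, #{y | o x y = true} ≤ 1) {r : V} (hr : ∀ w, o r w = false) {x y : V}
    (hadj : G.Adj x y) : o x y = true ↔ G.dist y r < G.dist x r := by
  refine ⟨fun h => by have := hG.dist_add_one_eq_of_orient hb hdeg hr h; omega, fun h => ?_⟩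
  by_contra hxy
  have := hG.dist_add_one_eq_of_orient hb hdeg hr ((hb y x hadj.symm).mpr (by simpa using hxy))
  omega

theorem card_filter_orient_and_mem [DecidableEq V]
    (hb : ∀ x y, G.Adj x y → (o x y = true ↔ o y x = false))
    {s : Finset (Sym2 V)} (hs : ∀ e ∈ s, e ∈ G.edgeSet) :
    #{q : V × V | o q.1 q.2 = true ∧ s(q.1, q.2) ∈ s} = #s := by
  refine card_nbij (fun q => s(q.1, q.2)) (fun q hq => (mem_filter.mp hq).2.2) ?_ ?_
  · rintro ⟨a₁, a₂⟩ ha ⟨b₁, b₂⟩ hb' hab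
    simp only [coe_filter, mem_univ, true_and, Set.mem_ofPred_eq] at ha hb'
    rcases Sym2.eq_iff.mp hab with ⟨rfl, rfl⟩ | ⟨rfl, rfl⟩
    · rfl
    · have := (hb _ _ (hs _ ha.2)).mp ha.1
      rw [this] at hb'
      exact absurd hb'.1 Bool.false_ne_true
  · intro e he
    induction e using Sym2.ind with
    | _ x y =>
    have hadj : G.Adj x y := hs _ he
    cases hxy : o x y
    · refine ⟨(y, x), ?_, Sym2.eq_swap⟩
      simpa [Sym2.eq_swap (a := y)] using And.intro ((hb y x hadj.symm).mpr hxy) he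
    · exact ⟨(x, y), by simpa using And.intro hxy he, rfl⟩

end Orientation

end SimpleGraph

open SimpleGraph

theorem stmt_14_general {V : Type*} [Fintype V]
    (T : SimpleGraph V) (hT : T.IsTree)
    (o1 o2 : V → V → Bool)
    (h1a : ∀ x y, o1 x y = true → T.Adj x y)
    (h1b : ∀ x y, T.Adj x y → (o1 x y = true ↔ o1 y x = false))
    (h1deg : ∀ x, (Finset.univ.filter (fun y => o1 x y = true)).card ≤ 1)
    (h2b : ∀ x y, T.Adj x y → (o2 x y = true ↔ o2 y x = false))
    (h2deg : ∀ x, (Finset.univ.filter (fun y => o2 x y = true)).card ≤ 1)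
    (r1 r2 : V)
    (hr1 : ∀ w, o1 r1 w = false)
    (hr2 : ∀ w, o2 r2 w = false) :
    (∀ p : T.Walk r1 r2, p.IsPath →
      ∀ x y : V, T.Adj x y → ((o1 x y ≠ o2 x y) ↔ s(x, y) ∈ p.edges)) ∧
    (Finset.univ.filter (fun q : V × V => o1 q.1 q.2 = true ∧ o2 q.2 q.1 = true)).card
      = T.dist r1 r2 := by
  classical
  have disagree_iff : ∀ p : T.Walk r1 r2, p.IsPath →
      ∀ x y : V, T.Adj x y → ((o1 x y ≠ o2 x y) ↔ s(x, y) ∈ p.edges) := by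
    intro p hp x y hadj
    rw [hT.mem_edges_iff_dist_lt hp hadj, Ne, Bool.eq_iff_iff,
      hT.orient_iff_dist_lt h1b h1deg hr1 hadj, hT.orient_iff_dist_lt h2b h2deg hr2 hadj]
    have := hT.dist_eq_dist_add_one_or r2 hadj
    omega
  refine ⟨disagree_iff, ?_⟩
  obtain ⟨p, hp, hpl⟩ := hT.connected.exists_path_of_dist r1 r2
  have hedges : ∀ e ∈ p.edges.toFinset, e ∈ T.edgeSet := fun e he =>
    p.edges_subset_edgeSet (List.mem_toFinset.mp he)
  rw [← hpl, ← Walk.length_edges, ← List.toFinset_card_of_nodup hp.edges_nodup,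
    ← card_filter_orient_and_mem h1b hedges]
  congr 1
  refine filter_congr fun q _ => and_congr_right fun hq => ?_
  have hadj := h1a _ _ hq
  rw [List.mem_toFinset, ← disagree_iff p hp _ _ hadj, hq, h2b _ _ hadj.symm]
  cases o2 q.1 q.2 <;> simp

/-- Let `T` be a finite tree with two orientations `D_1`, `D_2` of maximum
out-degree at most `1`, with unique out-degree-`0` vertices `r_1`, `r_2` respectively. Then the
edges on which `D_1` and `D_2` disagree are exactly the edges of the (unique) path in `T` from
`r_1` to `r_2`; in particular they disagree on exactly `dist_T(r_1, r_2)` edges (a disagreeing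
edge is counted by the ordered pair giving its `D_1`-direction). -/
theorem stmt_14 {V : Type*} [Fintype V]
    (T : SimpleGraph V) (hT : T.IsTree)
    (o1 o2 : V → V → Bool)
    (h1a : ∀ x y, o1 x y = true → T.Adj x y)
    (h1b : ∀ x y, T.Adj x y → (o1 x y = true ↔ o1 y x = false))
    (h1deg : ∀ x, (Finset.univ.filter (fun y => o1 x y = true)).card ≤ 1)
    (h2a : ∀ x y, o2 x y = true → T.Adj x y)
    (h2b : ∀ x y, T.Adj x y → (o2 x y = true ↔ o2 y x = false))
    (h2deg : ∀ x, (Finset.univ.filter (fun y => o2 x y = true)).card ≤ 1)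
    (r1 r2 : V)
    (hr1 : ∀ w, o1 r1 w = false)
    (hr1u : ∀ x, (∀ w, o1 x w = false) → x = r1)
    (hr2 : ∀ w, o2 r2 w = false)
    (hr2u : ∀ x, (∀ w, o2 x w = false) → x = r2) :
    (∀ p : T.Walk r1 r2, p.IsPath →
      ∀ x y : V, T.Adj x y → ((o1 x y ≠ o2 x y) ↔ s(x, y) ∈ p.edges)) ∧
    (Finset.univ.filter (fun q : V × V => o1 q.1 q.2 = true ∧ o2 q.2 q.1 = true)).card
      = T.dist r1 r2 :=
  stmt_14_general T hT o1 o2 h1a h1b h1deg h2b h2deg r1 r2 hr1 hr2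
end

section
/- Let k ≥ 1 and let P be the path graph obtained from two vertex-disjoint paths P_1 and P_2, each with exactly k edges, by adding a new edge x_1x_2, where x_i is an endpoint of P_i for i = 1, 2. For i = 1, 2 let D_i be an orientation of P_i in which every vertex has out-degree at most 1 and whose unique vertex of out-degree 0 lies at distance at least k/2 from x_i along P_i. Then every orientation of P in which every vertex has out-degree at most 1 orients at least k/2 of the edges of P_1 and P_2 differently from D_1 and D_2. -/
/-!
An orientation of `P` with out-degrees at most one has at most one sink: `P` is a tree, so it has
one vertex more than edges, and every edge is the out-arc of exactly one vertex. Hence all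
vertices of one of the two paths, say `P_i`, have out-degree one, and this forces the orientation
to run along `P_i` from its free end towards `x_i`. In `D_i` every vertex other than `r_i` has
out-degree one as well, so `D_i` orients each edge between `x_i` and `r_i` towards `r_i`. The two
orientations therefore disagree on at least `dist(r_i, x_i) ≥ k/2` edges.
-/

open SimpleGraph Finset

section

variable {V : Type*}

/-- `o x y = true` means that the edge `s(x, y)` of `E` is oriented from `x` to `y`. -/
structure IsOutDegLeOneOrientation (E : Set (Sym2 V)) (o : V → V → Bool) : Prop where
  mem : ∀ x y, o x y = true → s(x, y) ∈ E
  orient : ∀ x y, s(x, y) ∈ E → (o x y = true ↔ o y x = false)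
  out_le_one : ∀ x y y', o x y = true → o x y' = true → y = y'

namespace IsOutDegLeOneOrientation

variable {E : Set (Sym2 V)} {o : V → V → Bool}

theorem eq_false_of_eq_true (ho : IsOutDegLeOneOrientation E o) {x y : V} (h : o x y = true) :
    o y x = false :=
  (ho.orient x y (ho.mem x y h)).1 h

variable [Fintype V]

theorem card_arcs_eq {E : Finset (Sym2 V)} (ho : IsOutDegLeOneOrientation ↑E o) :
    #{q : V × V | o q.1 q.2 = true} = #E := by
  refine card_nbij (fun q => s(q.1, q.2)) (fun q hq => ho.mem _ _ (by simpa using hq)) ?_ ?_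
  · rintro ⟨a, b⟩ hab ⟨c, d⟩ hcd h
    simp only [coe_filter, mem_univ, true_and, Set.mem_ofPred_eq] at hab hcd
    rcases Sym2.eq_iff.1 h with ⟨rfl, rfl⟩ | ⟨rfl, rfl⟩
    · rfl
    · simp [ho.eq_false_of_eq_true hab] at hcd
  · intro e he
    induction e using Sym2.inductionOn with
    | hf x y =>
      cases hxy : o x y
      · have hyx := (ho.orient y x (by rwa [Sym2.eq_swap])).2 hxy
        exact ⟨(y, x), by simpa using hyx, Sym2.eq_swap⟩
      · exact ⟨(x, y), by simpa using hxy, rfl⟩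

theorem card_filter_exists_eq {E : Finset (Sym2 V)} (ho : IsOutDegLeOneOrientation ↑E o) :
    #{v | ∃ w, o v w = true} = #E := by
  rw [← ho.card_arcs_eq]
  symm
  refine card_nbij Prod.fst (fun q hq => by simpa using ⟨q.2, by simpa using hq⟩) ?_ ?_
  · rintro ⟨a, b⟩ hab ⟨c, d⟩ hcd (rfl : a = c)
    simp only [coe_filter, mem_univ, true_and, Set.mem_ofPred_eq] at hab hcd
    rw [ho.out_le_one a b d hab hcd]
  · intro v hv
    obtain ⟨w, hw⟩ : ∃ w, o v w = true := by simpa using hv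
    exact ⟨(v, w), by simpa using hw, rfl⟩

/-- By `card_filter_exists_eq`, exactly one vertex of `U` is a sink. -/
theorem exists_eq_true_of_ne_sink [DecidableEq V] {E : Finset (Sym2 V)}
    (ho : IsOutDegLeOneOrientation ↑E o)
    {U : Finset V} (hU : ∀ x y, o x y = true → x ∈ U) (hcard : #U = #E + 1)
    {r v : V} (hr : r ∈ U) (hrs : ∀ w, o r w = false) (hv : v ∈ U) (hvr : v ≠ r) :
    ∃ w, o v w = true := by
  by_contra! hvs
  have hsub : ({v | ∃ w, o v w = true} : Finset V) ⊆ U \ {r, v} := by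
    intro x hx
    obtain ⟨w, hw⟩ : ∃ w, o x w = true := by simpa using hx
    simp only [mem_sdiff, mem_insert, mem_singleton, not_or]
    refine ⟨hU x w hw, ?_, ?_⟩ <;> rintro rfl
    · simp [hrs] at hw
    · simp [hvs] at hw
  have hle := card_le_card hsub
  have hsplit :=
    card_sdiff_add_card_eq_card (s := {r, v}) (t := U) (by simp [insert_subset_iff, hr, hv])
  rw [ho.card_filter_exists_eq] at hle
  rw [card_pair hvr.symm] at hsplit
  omega

end IsOutDegLeOneOrientation

namespace SimpleGraph.Walk.IsPath

variable {G : SimpleGraph V} {u v : V} {p : G.Walk u v}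

theorem eq_getVert_succ_or_pred_of_mk_mem_edges (hp : p.IsPath) {i : ℕ} (hi : i ≤ p.length)
    {w : V} (h : s(p.getVert i, w) ∈ p.edges) :
    w = p.getVert (i + 1) ∨ (0 < i ∧ w = p.getVert (i - 1)) := by
  obtain ⟨j, hj, hjw⟩ := p.mk_mem_edges_iff_exists.1 h
  rcases Sym2.eq_iff.1 hjw with ⟨hji, rfl⟩ | ⟨rfl, hji⟩
  · obtain rfl : j = i := hp.getVert_injOn (by simp; omega) (by simpa) hji
    exact Or.inl rfl
  · obtain rfl : j + 1 = i := hp.getVert_injOn (by simp; omega) (by simpa) hji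
    exact Or.inr ⟨by omega, rfl⟩

theorem orient_getVert_succ_of_forall_exists (hp : p.IsPath) {o : V → V → Bool}
    (hanti : ∀ x y, o x y = true → o y x = false) {n : ℕ} (hn : n ≤ p.length)
    (hout : ∀ i < n, ∃ w, o (p.getVert i) w = true ∧ s(p.getVert i, w) ∈ p.edges) :
    ∀ i < n, o (p.getVert i) (p.getVert (i + 1)) = true := by
  intro i
  induction i with
  | zero =>
    intro h0
    obtain ⟨w, hw, hwe⟩ := hout 0 h0
    rcases hp.eq_getVert_succ_or_pred_of_mk_mem_edges (by omega) hwe with rfl | ⟨h, -⟩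
    · exact hw
    · omega
  | succ i ih =>
    intro hi
    obtain ⟨w, hw, hwe⟩ := hout (i + 1) hi
    rcases hp.eq_getVert_succ_or_pred_of_mk_mem_edges (by omega) hwe with rfl | ⟨-, rfl⟩
    · exact hw
    · simp [hanti _ _ (ih (by omega))] at hw

variable [Fintype V] [DecidableEq V]

theorem exists_eq_true_of_ne_sink (hp : p.IsPath) {o : V → V → Bool}
    (ho : IsOutDegLeOneOrientation {e | e ∈ p.edges} o) {r x : V} (hr : r ∈ p.support)
    (hrs : ∀ w, o r w = false) (hx : x ∈ p.support) (hxr : x ≠ r) : ∃ w, o x w = true := by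
  refine IsOutDegLeOneOrientation.exists_eq_true_of_ne_sink (E := p.edges.toFinset)
    (U := p.support.toFinset) (by rwa [List.coe_toFinset])
    (fun x y h => List.mem_toFinset.2 (p.fst_mem_support_of_mem_edges (ho.mem x y h))) ?_
    (List.mem_toFinset.2 hr) hrs (List.mem_toFinset.2 hx) hxr
  rw [List.toFinset_card_of_nodup hp.support_nodup, List.toFinset_card_of_nodup
    hp.isTrail.edges_nodup, length_support, length_edges]

theorem dist_le_card_disagree (hp : p.IsPath) {ob o : V → V → Bool}
    (hob : IsOutDegLeOneOrientation {e | e ∈ p.edges} ob) {r : V} (hr : r ∈ p.support)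
    (hrs : ∀ w, ob r w = false)
    (ho : ∀ i < p.length, o (p.getVert i) (p.getVert (i + 1)) = true) :
    (fromEdgeSet {e | e ∈ p.edges}).dist r v ≤
      #{q : V × V | ob q.1 q.2 = true ∧ o q.2 q.1 = true} := by
  have hr' : r ∈ p.reverse.support := by simpa using hr
  set j := (p.reverse.takeUntil r hr').length
  have hdist : (fromEdgeSet {e | e ∈ p.edges}).dist r v ≤ j := by
    rw [dist_comm]
    refine (dist_le ((p.reverse.takeUntil r hr').transfer _ fun e he => ?_)).trans_eq
      (length_transfer _ _)
    have heq : e ∈ p.edges := by simpa using p.reverse.edges_takeUntil_subset_edges hr' he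
    rw [edgeSet_fromEdgeSet]
    exact ⟨heq, G.not_isDiag_of_mem_edgeSet (p.edges_subset_edgeSet heq)⟩
  have hj : j ≤ p.reverse.length := p.reverse.length_takeUntil_le_length hr'
  have hob_back : ∀ t < j, ob (p.reverse.getVert t) (p.reverse.getVert (t + 1)) = true := by
    refine hp.reverse.orient_getVert_succ_of_forall_exists (o := ob)
      (fun _ _ h => hob.eq_false_of_eq_true h) hj fun t ht => ?_
    obtain ⟨w, hw⟩ := hp.exists_eq_true_of_ne_sink hob hr hrs
      (by simpa using p.reverse.getVert_mem_support t)
      (p.reverse.getVert_lt_length_takeUntil_ne hr' ht)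
    exact ⟨w, hw, by simpa using hob.mem _ _ hw⟩
  have ho_back :
      ∀ t < p.reverse.length, o (p.reverse.getVert (t + 1)) (p.reverse.getVert t) = true := by
    intro t ht
    have := ho (p.length - t - 1) (by simp at ht; omega)
    simp only [getVert_reverse]
    rwa [show p.length - (t + 1) = p.length - t - 1 by omega,
      show p.length - t = p.length - t - 1 + 1 by simp at ht; omega]
  refine hdist.trans ?_
  calc j = #(range j) := (card_range j).symm
    _ ≤ _ := card_le_card_of_injOn (fun t => (p.reverse.getVert t, p.reverse.getVert (t + 1)))
      (fun t ht => by
        simp only [coe_range, Set.mem_Iio] at ht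
        simpa using ⟨hob_back t ht, ho_back t (by omega)⟩)
      (fun t ht t' ht' h => by
        simp only [coe_range, Set.mem_Iio] at ht ht'
        exact hp.reverse.getVert_injOn (by rw [Set.mem_ofPred_eq]; omega)
          (by rw [Set.mem_ofPred_eq]; omega) (congrArg Prod.fst h))

end SimpleGraph.Walk.IsPath

section TwoPaths

variable [DecidableEq V] {P : SimpleGraph V} {a1 x1 a2 x2 : V}
  {p1 : P.Walk a1 x1} {p2 : P.Walk a2 x2}

theorem card_support_union_eq_card_edges_union_add_one (hp1 : p1.IsPath) (hp2 : p2.IsPath)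
    (hdisj : ∀ z ∈ p1.support, z ∉ p2.support) :
    #(p1.support.toFinset ∪ p2.support.toFinset) =
      #(p1.edges.toFinset ∪ p2.edges.toFinset ∪ {s(x1, x2)}) + 1 := by
  have hedisj : Disjoint p1.edges.toFinset p2.edges.toFinset := by
    refine disjoint_left.2 fun e he1 he2 => ?_
    induction e using Sym2.inductionOn with
    | hf x y =>
      exact hdisj x (p1.fst_mem_support_of_mem_edges (List.mem_toFinset.1 he1))
        (p2.fst_mem_support_of_mem_edges (List.mem_toFinset.1 he2))
  have hbridge : s(x1, x2) ∉ p1.edges.toFinset ∪ p2.edges.toFinset := by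
    simp only [mem_union, List.mem_toFinset, not_or]
    exact ⟨fun h => hdisj x2 (p1.snd_mem_support_of_mem_edges h) p2.end_mem_support,
      fun h => hdisj x1 p1.end_mem_support (p2.fst_mem_support_of_mem_edges h)⟩
  rw [card_union_of_disjoint (disjoint_left.2 fun z h1 h2 =>
      hdisj z (List.mem_toFinset.1 h1) (List.mem_toFinset.1 h2)),
    card_union_of_disjoint (disjoint_singleton_right.2 hbridge), card_union_of_disjoint hedisj,
    List.toFinset_card_of_nodup hp1.support_nodup, List.toFinset_card_of_nodup hp2.support_nodup,
    List.toFinset_card_of_nodup hp1.isTrail.edges_nodup,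
    List.toFinset_card_of_nodup hp2.isTrail.edges_nodup]
  simp only [Walk.length_support, Walk.length_edges, card_singleton]
  omega

theorem forall_exists_eq_true_or_forall_exists_eq_true [Fintype V] (hp1 : p1.IsPath)
    (hp2 : p2.IsPath)
    (hdisj : ∀ z ∈ p1.support, z ∉ p2.support)
    (hedges : P.edgeSet = {e | e ∈ p1.edges} ∪ {e | e ∈ p2.edges} ∪ {s(x1, x2)})
    {o : V → V → Bool} (ho : IsOutDegLeOneOrientation P.edgeSet o) :
    (∀ v ∈ p1.support, ∃ w, o v w = true) ∨ (∀ v ∈ p2.support, ∃ w, o v w = true) := by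
  have hE : P.edgeSet = ↑(p1.edges.toFinset ∪ p2.edges.toFinset ∪ {s(x1, x2)}) := by
    simp [hedges]
  have hU : ∀ x y, o x y = true → x ∈ p1.support.toFinset ∪ p2.support.toFinset := by
    intro x y h
    have hxy := ho.mem x y h
    simp only [hedges, Set.mem_union, Set.mem_ofPred_eq, Set.mem_singleton_iff] at hxy
    simp only [mem_union, List.mem_toFinset]
    rcases hxy with (h | h) | h
    · exact Or.inl (p1.fst_mem_support_of_mem_edges h)
    · exact Or.inr (p2.fst_mem_support_of_mem_edges h)
    · rcases Sym2.eq_iff.1 h with ⟨rfl, -⟩ | ⟨rfl, -⟩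
      · exact Or.inl p1.end_mem_support
      · exact Or.inr p2.end_mem_support
  by_contra! h
  obtain ⟨⟨r1, hr1, hr1s⟩, ⟨r2, hr2, hr2s⟩⟩ := h
  obtain ⟨w, hw⟩ := (hE ▸ ho).exists_eq_true_of_ne_sink hU
    (card_support_union_eq_card_edges_union_add_one hp1 hp2 hdisj)
    (by simpa using Or.inl hr1) (by simpa using hr1s) (by simpa using Or.inr hr2)
    (by rintro rfl; exact hdisj r2 hr1 hr2)
  exact hr2s w hw

theorem dist_le_card_disagree_of_forall_exists [Fintype V] (hp2 : p2.IsPath)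
    (hdisj : ∀ z ∈ p1.support, z ∉ p2.support)
    (hedges : P.edgeSet = {e | e ∈ p1.edges} ∪ {e | e ∈ p2.edges} ∪ {s(x1, x2)})
    {o2 o : V → V → Bool} (ho2 : IsOutDegLeOneOrientation {e | e ∈ p2.edges} o2)
    {r2 : V} (hr2 : r2 ∈ p2.support) (hr2s : ∀ w, o2 r2 w = false)
    (ho : IsOutDegLeOneOrientation P.edgeSet o) (hout : ∀ v ∈ p2.support, ∃ w, o v w = true) :
    (fromEdgeSet {e | e ∈ p2.edges}).dist r2 x2 ≤
      #{q : V × V | o2 q.1 q.2 = true ∧ o q.2 q.1 = true} := by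
  refine hp2.dist_le_card_disagree ho2 hr2 hr2s
    (hp2.orient_getVert_succ_of_forall_exists (o := o) (fun _ _ h => ho.eq_false_of_eq_true h)
      le_rfl fun i hi => ?_)
  obtain ⟨w, hw⟩ := hout _ (p2.getVert_mem_support i)
  refine ⟨w, hw, ?_⟩
  have hmem := ho.mem _ _ hw
  simp only [hedges, Set.mem_union, Set.mem_ofPred_eq, Set.mem_singleton_iff] at hmem
  rcases hmem with (h | h) | h
  · exact absurd (p2.getVert_mem_support i) (hdisj _ (p1.fst_mem_support_of_mem_edges h))
  · exact h
  · rcases Sym2.eq_iff.1 h with ⟨h1, -⟩ | ⟨h1, -⟩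
    · exact absurd (p2.getVert_mem_support i) (h1 ▸ hdisj _ p1.end_mem_support)
    · exact absurd ((hp2.getVert_eq_end_iff hi.le).1 h1) hi.ne

end TwoPaths

end

theorem stmt_15_general {V : Type*} [Fintype V] [DecidableEq V]
    (k : ℕ)
    (P : SimpleGraph V)
    (a1 x1 a2 x2 : V)
    (p1 : P.Walk a1 x1) (p2 : P.Walk a2 x2)
    (hp1 : p1.IsPath) (hp2 : p2.IsPath)
    (hdisj : ∀ z, z ∈ p1.support → z ∈ p2.support → False)
    (hedges : P.edgeSet = {e | e ∈ p1.edges} ∪ {e | e ∈ p2.edges} ∪ {s(x1, x2)})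
    (o1 o2 : V → V → Bool)
    (h1a : ∀ x y, o1 x y = true → s(x, y) ∈ p1.edges)
    (h1b : ∀ x y, s(x, y) ∈ p1.edges → (o1 x y = true ↔ o1 y x = false))
    (h1deg : ∀ x y y', o1 x y = true → o1 x y' = true → y = y')
    (h2a : ∀ x y, o2 x y = true → s(x, y) ∈ p2.edges)
    (h2b : ∀ x y, s(x, y) ∈ p2.edges → (o2 x y = true ↔ o2 y x = false))
    (h2deg : ∀ x y y', o2 x y = true → o2 x y' = true → y = y')
    (r1 r2 : V)
    (hr1 : r1 ∈ p1.support) (hr2 : r2 ∈ p2.support)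
    (hr1out : ∀ w, o1 r1 w = false) (hr2out : ∀ w, o2 r2 w = false)
    (hd1 : (k : ℝ) / 2 ≤
      ((SimpleGraph.fromEdgeSet {e | e ∈ p1.edges}).dist r1 x1 : ℝ))
    (hd2 : (k : ℝ) / 2 ≤
      ((SimpleGraph.fromEdgeSet {e | e ∈ p2.edges}).dist r2 x2 : ℝ)) :
    ∀ o : V → V → Bool,
      (∀ x y, o x y = true → P.Adj x y) →
      (∀ x y, P.Adj x y → (o x y = true ↔ o y x = false)) →
      (∀ x y y', o x y = true → o x y' = true → y = y') →
      (k : ℝ) / 2 ≤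
        ((Finset.univ.filter (fun q : V × V =>
          (o1 q.1 q.2 = true ∨ o2 q.1 q.2 = true) ∧ o q.2 q.1 = true)).card : ℝ) := by
  intro o ho1 ho2 ho3
  have ho : IsOutDegLeOneOrientation P.edgeSet o := ⟨ho1, ho2, ho3⟩
  have hcount : ∀ o' : V → V → Bool, (∀ x y, o' x y = true → o1 x y = true ∨ o2 x y = true) →
      #{q : V × V | o' q.1 q.2 = true ∧ o q.2 q.1 = true} ≤
        #{q : V × V | (o1 q.1 q.2 = true ∨ o2 q.1 q.2 = true) ∧ o q.2 q.1 = true} :=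
    fun o' h => card_le_card fun q hq => by
      simp only [mem_filter] at hq ⊢
      exact ⟨hq.1, h _ _ hq.2.1, hq.2.2⟩
  rcases forall_exists_eq_true_or_forall_exists_eq_true hp1 hp2 hdisj hedges ho with hout | hout
  · have hedges' : P.edgeSet = {e | e ∈ p2.edges} ∪ {e | e ∈ p1.edges} ∪ {s(x2, x1)} := by
      rw [hedges, Set.union_comm {e | e ∈ p1.edges}, Sym2.eq_swap]
    have key := dist_le_card_disagree_of_forall_exists hp1 (fun z h2 h1 => hdisj z h1 h2)
      hedges' ⟨h1a, h1b, h1deg⟩ hr1 hr1out ho hout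
    exact hd1.trans (by exact_mod_cast key.trans (hcount o1 fun _ _ => Or.inl))
  · have key := dist_le_card_disagree_of_forall_exists hp2 hdisj hedges
      ⟨h2a, h2b, h2deg⟩ hr2 hr2out ho hout
    exact hd2.trans (by exact_mod_cast key.trans (hcount o2 fun _ _ => Or.inr))

/-- Let `P` be the path graph obtained from two vertex-disjoint paths `p₁`
(from `a₁` to `x₁`) and `p₂` (from `a₂` to `x₂`), each with exactly `k` edges (`k ≥ 1`), by
adding the edge `x₁x₂`. Let `D_i` (given by `o_i`) be an orientation of `P_i` with all
out-degrees at most `1` whose unique out-degree-`0` vertex `r_i` lies at distance at least `k/2`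
from `x_i` along `P_i`. Then every orientation `o` of `P` with all out-degrees at most `1`
orients at least `k/2` of the edges of `P₁` and `P₂` differently from `D₁` and `D₂` (a
differing edge is counted by the ordered pair giving its `D_i`-direction). -/
theorem stmt_15 {V : Type*} [Fintype V] [DecidableEq V]
    (k : ℕ) (hk : 1 ≤ k)
    (P : SimpleGraph V)
    (a1 x1 a2 x2 : V)
    (p1 : P.Walk a1 x1) (p2 : P.Walk a2 x2)
    (hp1 : p1.IsPath) (hp2 : p2.IsPath)
    (hl1 : p1.length = k) (hl2 : p2.length = k)
    (hdisj : ∀ z, z ∈ p1.support → z ∈ p2.support → False)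
    (hall : ∀ z, z ∈ p1.support ∨ z ∈ p2.support)
    (hx : P.Adj x1 x2)
    (hedges : P.edgeSet = {e | e ∈ p1.edges} ∪ {e | e ∈ p2.edges} ∪ {s(x1, x2)})
    (o1 o2 : V → V → Bool)
    (h1a : ∀ x y, o1 x y = true → s(x, y) ∈ p1.edges)
    (h1b : ∀ x y, s(x, y) ∈ p1.edges → (o1 x y = true ↔ o1 y x = false))
    (h1deg : ∀ x y y', o1 x y = true → o1 x y' = true → y = y')
    (h2a : ∀ x y, o2 x y = true → s(x, y) ∈ p2.edges)
    (h2b : ∀ x y, s(x, y) ∈ p2.edges → (o2 x y = true ↔ o2 y x = false))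
    (h2deg : ∀ x y y', o2 x y = true → o2 x y' = true → y = y')
    (r1 r2 : V)
    (hr1 : r1 ∈ p1.support) (hr2 : r2 ∈ p2.support)
    (hr1out : ∀ w, o1 r1 w = false) (hr2out : ∀ w, o2 r2 w = false)
    (hd1 : (k : ℝ) / 2 ≤
      ((SimpleGraph.fromEdgeSet {e | e ∈ p1.edges}).dist r1 x1 : ℝ))
    (hd2 : (k : ℝ) / 2 ≤
      ((SimpleGraph.fromEdgeSet {e | e ∈ p2.edges}).dist r2 x2 : ℝ)) :
    ∀ o : V → V → Bool,
      (∀ x y, o x y = true → P.Adj x y) →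
      (∀ x y, P.Adj x y → (o x y = true ↔ o y x = false)) →
      (∀ x y y', o x y = true → o x y' = true → y = y') →
      (k : ℝ) / 2 ≤
        ((Finset.univ.filter (fun q : V × V =>
          (o1 q.1 q.2 = true ∨ o2 q.1 q.2 = true) ∧ o q.2 q.1 = true)).card : ℝ) :=
  stmt_15_general k P a1 x1 a2 x2 p1 p2 hp1 hp2 hdisj hedges o1 o2 h1a h1b h1deg h2a h2b h2deg r1 r2
    hr1 hr2 hr1out hr2out hd1 hd2
end
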